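/- arXiv:1711.08261 — 11 statements merged into one kernel-verified Lean document; each statement's English description precedes it below -/
import Mathlib

section
/- A finite simple graph G is a split graph if and only if its vertex set can be partitioned into an independent set and a clique. -/
open SimpleGraph Set

/-- A graph is an interval graph if it is the intersection graph of a family of
closed intervals on the real line. -/
def IsIntervalGraph {V : Type*} (G : SimpleGraph V) : Prop :=
  ∃ lo hi : V → ℝ, ∀ u v : V, u ≠ v →
    (G.Adj u v ↔ (Set.Icc (lo u) (hi u) ∩ Set.Icc (lo v) (hi v)).Nonempty)

/-- `G` is the intersection graph of a family of boxes in Euclidean `k`-space. -/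
def HasBoxRep {V : Type*} (G : SimpleGraph V) (k : ℕ) : Prop :=
  ∃ lo hi : V → Fin k → ℝ, ∀ u v : V, u ≠ v →
    (G.Adj u v ↔ ∀ i, (Set.Icc (lo u i) (hi u i) ∩ Set.Icc (lo v i) (hi v i)).Nonempty)

/-- The boxicity of `G`: the minimum `k` such that `G` is the intersection graph of
a family of boxes in Euclidean `k`-space. -/
noncomputable def boxicity {V : Type*} (G : SimpleGraph V) : ℕ :=
  sInf {k | HasBoxRep G k}

/-- A set of vertices is independent if no two of its vertices are adjacent. -/
def IsIndepSet' {V : Type*} (G : SimpleGraph V) (s : Set V) : Prop :=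
  s.Pairwise fun x y => ¬ G.Adj x y

/-- A graph is chordal if it has no induced cycle of length at least `4`. -/
def IsChordal {V : Type*} (G : SimpleGraph V) : Prop :=
  ∀ n : ℕ, 4 ≤ n → ∀ f : ZMod n → V, Function.Injective f →
    ¬ (∀ i j : ZMod n, G.Adj (f i) (f j) ↔ i = j + 1 ∨ j = i + 1)

/-- `u, v, w` form an asteroidal triple: they are distinct and between any two of
them there is a path avoiding the neighborhood of the third. -/
def IsAsteroidalTriple {V : Type*} (G : SimpleGraph V) (u v w : V) : Prop :=
  u ≠ v ∧ v ≠ w ∧ u ≠ w ∧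
  ∃ (p : G.Walk u v) (q : G.Walk v w) (r : G.Walk w u),
    p.IsPath ∧ q.IsPath ∧ r.IsPath ∧
    (∀ x ∈ p.support, ¬ G.Adj w x) ∧
    (∀ x ∈ q.support, ¬ G.Adj u x) ∧
    (∀ x ∈ r.support, ¬ G.Adj v x)

/-- The circulant graph `G_{a,b}`: vertices `0, …, a-1`, with `u ~ v` iff
`u = v + c (mod a)` for some `b ≤ c ≤ a - b`. -/
def circG (a b : ℕ) : SimpleGraph (ZMod a) :=
  SimpleGraph.fromRel (fun u v => ∃ c : ℕ, b ≤ c ∧ c ≤ a - b ∧ u = v + (c : ZMod a))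

/- ### Auxiliary lemmas -/

lemma noC4 {V : Type*} {G : SimpleGraph V} (h : IsChordal G) {a b c d : V}
    (hab : G.Adj a b) (hbc : G.Adj b c) (hcd : G.Adj c d) (hda : G.Adj d a)
    (hac : ¬G.Adj a c) (hbd : ¬G.Adj b d) (hac' : a ≠ c) (hbd' : b ≠ d) : False := by
  have enum : ∀ i : ZMod 4, i = 0 ∨ i = 1 ∨ i = 2 ∨ i = 3 := by decide
  set f : ZMod 4 → V := fun i => if i = 0 then a else if i = 1 then b else if i = 2 then c else d with hf
  have e0 : f 0 = a := by simp [hf]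
  have e1 : f 1 = b := by simp [hf, show (1:ZMod 4) ≠ 0 from by decide]
  have e2 : f 2 = c := by simp [hf, show (2:ZMod 4) ≠ 0 from by decide, show (2:ZMod 4) ≠ 1 from by decide]
  have e3 : f 3 = d := by simp [hf, show (3:ZMod 4) ≠ 0 from by decide, show (3:ZMod 4) ≠ 1 from by decide, show (3:ZMod 4) ≠ 2 from by decide]
  refine h 4 (le_refl _) f ?_ ?_
  · intro i j hij
    rcases enum i with rfl|rfl|rfl|rfl <;> rcases enum j with rfl|rfl|rfl|rfl <;>
      simp only [e0, e1, e2, e3] at hij <;>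
      first
      | rfl
      | exact absurd hij hab.ne
      | exact absurd hij hab.ne'
      | exact absurd hij hbc.ne
      | exact absurd hij hbc.ne'
      | exact absurd hij hcd.ne
      | exact absurd hij hcd.ne'
      | exact absurd hij hda.ne
      | exact absurd hij hda.ne'
      | exact absurd hij hac'
      | exact absurd hij (Ne.symm hac')
      | exact absurd hij hbd'
      | exact absurd hij (Ne.symm hbd')
  · intro i j
    rcases enum i with rfl|rfl|rfl|rfl <;> rcases enum j with rfl|rfl|rfl|rfl <;>
      simp only [e0, e1, e2, e3] <;> constructor <;> intro hh <;>
      first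
      | decide
      | assumption
      | exact hab.symm
      | exact hbc.symm
      | exact hcd.symm
      | exact hda.symm
      | exact absurd hh G.irrefl
      | exact absurd hh hac
      | exact absurd hh hbd
      | exact absurd hh (fun h2 => hac h2.symm)
      | exact absurd hh (fun h2 => hbd h2.symm)
      | exact absurd hh (by decide)

lemma noC5 {V : Type*} {G : SimpleGraph V} (h : IsChordal G) {a b c d e : V}
    (hab : G.Adj a b) (hbc : G.Adj b c) (hcd : G.Adj c d) (hde : G.Adj d e) (hea : G.Adj e a)
    (hac : ¬G.Adj a c) (had : ¬G.Adj a d) (hbd : ¬G.Adj b d) (hbe : ¬G.Adj b e) (hce : ¬G.Adj c e)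
    (hac' : a ≠ c) (had' : a ≠ d) (hbd' : b ≠ d) (hbe' : b ≠ e) (hce' : c ≠ e) : False := by
  have enum : ∀ i : ZMod 5, i = 0 ∨ i = 1 ∨ i = 2 ∨ i = 3 ∨ i = 4 := by decide
  set f : ZMod 5 → V := fun i => if i = 0 then a else if i = 1 then b else if i = 2 then c else if i = 3 then d else e with hf
  have e0 : f 0 = a := by simp [hf]
  have e1 : f 1 = b := by simp [hf, show (1:ZMod 5) ≠ 0 from by decide]
  have e2 : f 2 = c := by simp [hf, show (2:ZMod 5) ≠ 0 from by decide, show (2:ZMod 5) ≠ 1 from by decide]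
  have e3 : f 3 = d := by simp [hf, show (3:ZMod 5) ≠ 0 from by decide, show (3:ZMod 5) ≠ 1 from by decide, show (3:ZMod 5) ≠ 2 from by decide]
  have e4 : f 4 = e := by simp [hf, show (4:ZMod 5) ≠ 0 from by decide, show (4:ZMod 5) ≠ 1 from by decide, show (4:ZMod 5) ≠ 2 from by decide, show (4:ZMod 5) ≠ 3 from by decide]
  refine h 5 (by norm_num) f ?_ ?_
  · intro i j hij
    rcases enum i with rfl|rfl|rfl|rfl|rfl <;> rcases enum j with rfl|rfl|rfl|rfl|rfl <;>
      simp only [e0, e1, e2, e3, e4] at hij <;>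
      first
      | rfl
      | exact absurd hij hab.ne
      | exact absurd hij hab.ne'
      | exact absurd hij hbc.ne
      | exact absurd hij hbc.ne'
      | exact absurd hij hcd.ne
      | exact absurd hij hcd.ne'
      | exact absurd hij hde.ne
      | exact absurd hij hde.ne'
      | exact absurd hij hea.ne
      | exact absurd hij hea.ne'
      | exact absurd hij hac'
      | exact absurd hij (Ne.symm hac')
      | exact absurd hij had'
      | exact absurd hij (Ne.symm had')
      | exact absurd hij hbd'
      | exact absurd hij (Ne.symm hbd')
      | exact absurd hij hbe'
      | exact absurd hij (Ne.symm hbe')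
      | exact absurd hij hce'
      | exact absurd hij (Ne.symm hce')
  · intro i j
    rcases enum i with rfl|rfl|rfl|rfl|rfl <;> rcases enum j with rfl|rfl|rfl|rfl|rfl <;>
      simp only [e0, e1, e2, e3, e4] <;> constructor <;> intro hh <;>
      first
      | decide
      | assumption
      | exact hab.symm
      | exact hbc.symm
      | exact hcd.symm
      | exact hde.symm
      | exact hea.symm
      | exact absurd hh G.irrefl
      | exact absurd hh hac
      | exact absurd hh had
      | exact absurd hh hbd
      | exact absurd hh hbe
      | exact absurd hh hce
      | exact absurd hh (fun h2 => hac h2.symm)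
      | exact absurd hh (fun h2 => had h2.symm)
      | exact absurd hh (fun h2 => hbd h2.symm)
      | exact absurd hh (fun h2 => hbe h2.symm)
      | exact absurd hh (fun h2 => hce h2.symm)
      | exact absurd hh (by decide)

lemma no2K2 {V : Type*} {G : SimpleGraph V} (h : IsChordal Gᶜ) {x y z w : V}
    (hxy : G.Adj x y) (hzw : G.Adj z w)
    (hxz : ¬G.Adj x z) (hxw : ¬G.Adj x w) (hyz : ¬G.Adj y z) (hyw : ¬G.Adj y w)
    (hxz' : x ≠ z) (hxw' : x ≠ w) (hyz' : y ≠ z) (hyw' : y ≠ w) : False := by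
  refine noC4 h (G := Gᶜ) (a := x) (b := z) (c := y) (d := w) ?_ ?_ ?_ ?_ ?_ ?_ hxy.ne hzw.ne
  · exact ⟨hxz', hxz⟩
  · exact ⟨hyz'.symm, fun hh => hyz hh.symm⟩
  · exact ⟨hyw', hyw⟩
  · exact ⟨hxw'.symm, fun hh => hxw hh.symm⟩
  · rw [compl_adj]; push_neg; intro h'; exact hxy
  · rw [compl_adj]; push_neg; intro h'; exact hzw

lemma czne {n s t : ℕ} (h1 : s < t) (h2 : t - s < n) : ((s : ZMod n) ≠ (t : ZMod n)) := by
  rw [Ne, ZMod.natCast_eq_natCast_iff]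
  intro hmod
  have hd := (Nat.modEq_iff_dvd' h1.le).1 hmod
  have := Nat.le_of_dvd (by omega) hd
  omega

lemma split_chordal {V : Type*} {G : SimpleGraph V} {S K : Set V}
    (hS : IsIndepSet' G S) (hK : G.IsClique K) (hcov : S ∪ K = Set.univ) : IsChordal G := by
  intro n hn f hinj hadj
  have mem : ∀ v : V, v ∈ S ∨ v ∈ K := fun v => by
    have : v ∈ S ∪ K := by rw [hcov]; exact Set.mem_univ v
    exact this
  set c : ℕ → ZMod n := fun s => (s : ZMod n) with hc
  have hcadd : ∀ s : ℕ, c (s+1) = c s + 1 := by intro s; simp [hc]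
  have fne : ∀ s t : ℕ, s < t → t - s < n → f (c s) ≠ f (c t) := by
    intro s t h1 h2 hh
    exact czne h1 h2 (hinj hh)
  have consec : ∀ s : ℕ, G.Adj (f (c s)) (f (c (s+1))) := by
    intro s; rw [hadj]; right; exact hcadd s
  have nonadj : ∀ s t : ℕ, s + 2 ≤ t → t - s < n → t + 1 - s < n → ¬ G.Adj (f (c s)) (f (c t)) := by
    intro s t h1 h2 h3 hA
    rw [hadj] at hA
    rcases hA with hA | hA
    · rw [← hcadd] at hA
      exact czne (show s < t + 1 by omega) (by omega) hA
    · rw [← hcadd] at hA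
      exact czne (show s + 1 < t by omega) (by omega) hA.symm
  have notKK : ∀ s t : ℕ, s + 2 ≤ t → t - s < n → t + 1 - s < n →
      f (c s) ∈ K → f (c t) ∈ K → False := by
    intro s t h1 h2 h3 hs ht
    exact nonadj s t h1 h2 h3 (hK hs ht (fne s t (by omega) h2))
  have notSS : ∀ s : ℕ, s + 1 - s < n → f (c s) ∈ S → f (c (s+1)) ∈ S → False := by
    intro s h2 hs ht
    exact hS hs ht (fne s (s+1) (by omega) (by omega)) (consec s)
  have h01 : f (c 0) ∈ K ∨ f (c 1) ∈ K := by
    rcases mem (f (c 0)) with h | h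
    · rcases mem (f (c 1)) with h' | h'
      · exact absurd (notSS 0 (by omega) h h') (fun hh => hh)
      · exact Or.inr h'
    · exact Or.inl h
  have h23 : f (c 2) ∈ K ∨ f (c 3) ∈ K := by
    rcases mem (f (c 2)) with h | h
    · rcases mem (f (c 3)) with h' | h'
      · exact absurd (notSS 2 (by omega) h h') (fun hh => hh)
      · exact Or.inr h'
    · exact Or.inl h
  have k02 : f (c 0) ∈ K → f (c 2) ∈ K → False := fun a b => notKK 0 2 (by omega) (by omega) (by omega) a b
  have k13 : f (c 1) ∈ K → f (c 3) ∈ K → False := fun a b => notKK 1 3 (by omega) (by omega) (by omega) a b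
  rcases Nat.lt_or_ge n 5 with h5 | h5
  · have hn4 : n = 4 := by omega
    subst hn4
    have adj03 : G.Adj (f (c 0)) (f (c 3)) := by
      rw [hadj]; left
      show ((0:ℕ) : ZMod 4) = ((3:ℕ) : ZMod 4) + 1
      decide
    rcases h01 with h0 | h1
    · rcases h23 with hc2 | h3
      · exact k02 h0 hc2
      · rcases mem (f (c 1)) with m1 | m1
        · rcases mem (f (c 2)) with m2 | m2
          · exact notSS 1 (by omega) m1 m2
          · exact k02 h0 m2
        · exact k13 m1 h3
    · rcases h23 with hc2 | h3
      · rcases mem (f (c 0)) with m0 | m0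
        · rcases mem (f (c 3)) with m3 | m3
          · exact hS m0 m3 (fne 0 3 (by omega) (by omega)) adj03
          · exact k13 h1 m3
        · exact k02 m0 hc2
      · exact k13 h1 h3
  · have k03 : f (c 0) ∈ K → f (c 3) ∈ K → False := fun a b => notKK 0 3 (by omega) (by omega) (by omega) a b
    have k14 : f (c 1) ∈ K → f (c 4) ∈ K → False := fun a b => notKK 1 4 (by omega) (by omega) (by omega) a b
    rcases h01 with h0 | h1
    · rcases h23 with hc2 | h3
      · exact k02 h0 hc2
      · exact k03 h0 h3
    · rcases h23 with hc2 | h3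
      · rcases mem (f (c 3)) with m3 | m3
        · rcases mem (f (c 4)) with m4 | m4
          · exact notSS 3 (by omega) m3 m4
          · exact k14 h1 m4
        · exact k13 h1 m3
      · exact k13 h1 h3

lemma chordal_split {V : Type*} [Fintype V] {G : SimpleGraph V}
    (h1 : IsChordal G) (h2 : IsChordal Gᶜ) :
    ∃ S K : Set V, IsIndepSet' G S ∧ G.IsClique K ∧ S ∪ K = Set.univ ∧ Disjoint S K := by
  classical
  set M : ℕ := Fintype.card V * Fintype.card V + 1 with hM
  set e : Finset V → ℕ := fun K => ((Finset.univ : Finset (V × V)).filter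
      (fun p => G.Adj p.1 p.2 ∧ p.1 ∉ K ∧ p.2 ∉ K)).card with he
  have he_lt : ∀ K, e K < M := by
    intro K
    calc e K ≤ (Finset.univ : Finset (V × V)).card := Finset.card_filter_le _ _
    _ = Fintype.card V * Fintype.card V := by simp [Finset.card_univ]
    _ < M := by omega
  set φ : Finset V → ℕ := fun K => M * K.card + (M - 1 - e K) with hφ
  set cliques : Finset (Finset V) := Finset.univ.filter (fun K : Finset V => G.IsClique (↑K : Set V)) with hcq
  have hne : cliques.Nonempty := ⟨∅, by simp [hcq]⟩
  obtain ⟨K, hKmem, hKmax⟩ := Finset.exists_max_image cliques φ hne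
  have hKclique : G.IsClique (↑K : Set V) := by
    rw [hcq] at hKmem; simpa using hKmem
  have maxcard : ∀ K' : Finset V, G.IsClique (↑K' : Set V) → K'.card ≤ K.card := by
    intro K' hK'
    by_contra hgt
    push_neg at hgt
    have h1' := hKmax K' (by simp [hcq, hK'])
    have hlb : φ K' ≥ M * K'.card := by simp [hφ]
    have h2' : φ K < M * (K.card + 1) := by
      have := he_lt K
      simp only [hφ]
      have : M - 1 - e K < M := by omega
      nlinarith
    have : M * (K.card + 1) ≤ M * K'.card := by
      apply Nat.mul_le_mul_left
      omega
    omega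
  have minedge : ∀ K' : Finset V, G.IsClique (↑K' : Set V) → K'.card = K.card → e K ≤ e K' := by
    intro K' hK' hcard
    by_contra hlt
    push_neg at hlt
    have h1' := hKmax K' (by simp [hcq, hK'])
    have hB := he_lt K
    have hB' := he_lt K'
    simp only [hφ, hcard] at h1'
    omega
  have bigger : ∀ v : V, v ∉ K → (∀ z ∈ K, G.Adj v z) → False := by
    intro v hv hall
    have hcl : G.IsClique (↑(insert v K) : Set V) := by
      rw [Finset.coe_insert]
      exact hKclique.insert (fun b hb _ => hall b hb)
    have := maxcard _ hcl
    rw [Finset.card_insert_of_notMem hv] at this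
    omega
  have key : ∀ u v : V, u ∉ K → v ∉ K → G.Adj u v →
      (K.filter (fun z => ¬G.Adj u z) ⊆ K.filter (fun z => ¬G.Adj v z)) → False := by
    intro u v hu hv huv hsub
    have hAune : (K.filter (fun z => ¬G.Adj u z)).Nonempty := by
      rw [Finset.filter_nonempty_iff]
      by_contra hno
      push_neg at hno
      exact bigger u hu (fun z hz => hno z hz)
    have hcard1 : (K.filter (fun z => ¬G.Adj u z)).card ≤ 1 := by
      apply Finset.card_le_one.2
      intro z hz w hw
      by_contra hzw
      have hzB := hsub hz
      have hwB := hsub hw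
      rw [Finset.mem_filter] at hz hw hzB hwB
      exact no2K2 h2 huv (hKclique hz.1 hw.1 hzw)
        hz.2 hw.2 hzB.2 hwB.2
        (fun hh => hu (hh ▸ hz.1)) (fun hh => hu (hh ▸ hw.1))
        (fun hh => hv (hh ▸ hz.1)) (fun hh => hv (hh ▸ hw.1))
    obtain ⟨z, hzeq⟩ := Finset.card_eq_one.1 (le_antisymm hcard1 hAune.card_pos)
    have hzA : z ∈ K.filter (fun t => ¬G.Adj u t) := by rw [hzeq]; exact Finset.mem_singleton_self z
    have hzB : z ∈ K.filter (fun t => ¬G.Adj v t) := hsub hzA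
    rw [Finset.mem_filter] at hzA hzB
    obtain ⟨hzK, hzu⟩ := hzA
    have hzv := hzB.2
    have huz' : u ≠ z := fun hh => hu (hh ▸ hzK)
    have hvz' : v ≠ z := fun hh => hv (hh ▸ hzK)
    have hxall : ∀ t ∈ K, t ≠ z → G.Adj u t := by
      intro t htK htz
      by_contra hnot
      have : t ∈ K.filter (fun s => ¬G.Adj u s) := Finset.mem_filter.2 ⟨htK, hnot⟩
      rw [hzeq, Finset.mem_singleton] at this
      exact htz this
    by_cases hBz : ∀ b ∈ K, ¬G.Adj v b → b = z
    · -- v adjacent to all of K \ {z}: bigger clique insert u (insert v (K.erase z))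
      have hvall : ∀ t ∈ K.erase z, G.Adj v t := by
        intro t ht
        rw [Finset.mem_erase] at ht
        by_contra hnot
        exact ht.1 (hBz t ht.2 hnot)
      have hcl : G.IsClique (↑(insert u (insert v (K.erase z))) : Set V) := by
        rw [Finset.coe_insert, Finset.coe_insert]
        apply SimpleGraph.IsClique.insert
        · apply SimpleGraph.IsClique.insert
          · exact hKclique.subset (by rw [Finset.coe_erase]; exact Set.diff_subset)
          · intro b hb _
            exact hvall b hb
        · intro b hb hub
          rcases Set.mem_insert_iff.1 hb with rfl | hb2
          · exact huv
          · rw [Finset.mem_coe, Finset.mem_erase] at hb2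
            exact hxall b hb2.2 hb2.1
      have hKpos : 1 ≤ K.card := Finset.card_pos.2 ⟨z, hzK⟩
      have hvni : v ∉ insert v (K.erase z) → False := fun hh => hh (Finset.mem_insert_self _ _)
      have hcard : (insert u (insert v (K.erase z))).card = K.card + 1 := by
        rw [Finset.card_insert_of_notMem, Finset.card_insert_of_notMem,
          Finset.card_erase_of_mem hzK]
        · omega
        · intro hh; exact hv (Finset.mem_of_mem_erase hh)
        · intro hh
          rcases Finset.mem_insert.1 hh with rfl | hh2
          · exact huv.ne rfl
          · exact hu (Finset.mem_of_mem_erase hh2)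
      have := maxcard _ hcl
      omega
    · push_neg at hBz
      obtain ⟨b, hbK, hbv, hbz⟩ := hBz
      have hub : G.Adj u b := hxall b hbK hbz
      have hvb' : v ≠ b := fun hh => hv (hh ▸ hbK)
      -- exchange clique K' = insert u (K.erase z)
      have hcl' : G.IsClique (↑(insert u (K.erase z)) : Set V) := by
        rw [Finset.coe_insert]
        apply SimpleGraph.IsClique.insert
        · exact hKclique.subset (by rw [Finset.coe_erase]; exact Set.diff_subset)
        · intro t ht _
          rw [Finset.mem_coe, Finset.mem_erase] at ht
          exact hxall t ht.2 ht.1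
      have hKpos : 1 ≤ K.card := Finset.card_pos.2 ⟨z, hzK⟩
      have huK' : u ∉ K.erase z := fun hh => hu (Finset.mem_of_mem_erase hh)
      have hcard' : (insert u (K.erase z)).card = K.card := by
        rw [Finset.card_insert_of_notMem huK', Finset.card_erase_of_mem hzK]
        omega
      have hmin := minedge _ hcl' hcard'
      -- z must have a neighbor outside K other than u
      have hw : ∃ w, w ∉ K ∧ w ≠ u ∧ G.Adj z w := by
        by_contra hno
        push_neg at hno
        set K' := insert u (K.erase z) with hK'
        have hsub2 : Finset.univ.filter (fun p : V×V => G.Adj p.1 p.2 ∧ p.1 ∉ K' ∧ p.2 ∉ K')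
            ⊆ (Finset.univ.filter (fun p : V×V => G.Adj p.1 p.2 ∧ p.1 ∉ K ∧ p.2 ∉ K)).erase (u,v) := by
          intro p hp
          rw [Finset.mem_filter] at hp
          have hadj := hp.2.1
          have hp1 := hp.2.2.1
          have hp2 := hp.2.2.2
          have hp1u : p.1 ≠ u := fun hh => hp1 (hh ▸ Finset.mem_insert_self u (K.erase z))
          have hp2u : p.2 ≠ u := fun hh => hp2 (hh ▸ Finset.mem_insert_self u (K.erase z))
          have hp1z : p.1 ≠ z := by
            intro hh
            subst hh
            have hp2K : p.2 ∉ K := by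
              intro hk
              by_cases hzz : p.2 = p.1
              · exact G.irrefl (hzz ▸ hadj)
              · exact hp2 (Finset.mem_insert_of_mem (Finset.mem_erase.2 ⟨hzz, hk⟩))
            exact hno p.2 hp2K hp2u hadj
          have hp2z : p.2 ≠ z := by
            intro hh
            subst hh
            have hp1K : p.1 ∉ K := by
              intro hk
              by_cases hzz : p.1 = p.2
              · exact G.irrefl (hzz ▸ hadj)
              · exact hp1 (Finset.mem_insert_of_mem (Finset.mem_erase.2 ⟨hzz, hk⟩))
            exact hno p.1 hp1K hp1u hadj.symm
          have hp1K : p.1 ∉ K := fun hk =>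
            hp1 (Finset.mem_insert_of_mem (Finset.mem_erase.2 ⟨hp1z, hk⟩))
          have hp2K : p.2 ∉ K := fun hk =>
            hp2 (Finset.mem_insert_of_mem (Finset.mem_erase.2 ⟨hp2z, hk⟩))
          rw [Finset.mem_erase, Finset.mem_filter]
          refine ⟨?_, Finset.mem_univ _, hadj, hp1K, hp2K⟩
          intro hh
          exact hp1u (congrArg Prod.fst hh)
        have hmem_uv : (u,v) ∈ Finset.univ.filter (fun p : V×V => G.Adj p.1 p.2 ∧ p.1 ∉ K ∧ p.2 ∉ K) := by
          rw [Finset.mem_filter]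
          exact ⟨Finset.mem_univ _, huv, hu, hv⟩
        have hlt : e K' < e K := by
          have hle := Finset.card_le_card hsub2
          rw [Finset.card_erase_of_mem hmem_uv] at hle
          have hpos : 0 < e K := by
            rw [he]
            exact Finset.card_pos.2 ⟨(u,v), hmem_uv⟩
          simp only [he] at *
          omega
        omega
      obtain ⟨w, hwK, hwu, hzw⟩ := hw
      have hwv : w ≠ v := by
        intro hh
        subst hh
        exact hzv hzw.symm
      have huw' : u ≠ w := hwu.symm
      have hvw' : v ≠ w := hwv.symm
      by_cases hwu2 : G.Adj w u
      · by_cases hwall : ∀ t ∈ K, G.Adj w t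
        · exact bigger w hwK hwall
        · push_neg at hwall
          obtain ⟨t, htK, hwt⟩ := hwall
          have htz : t ≠ z := fun hh => hwt (hh ▸ hzw.symm)
          have hut : G.Adj u t := hxall t htK htz
          have hzt : G.Adj z t := hKclique hzK htK (Ne.symm htz)
          exact noC4 h1 hwu2.symm hzw.symm hzt hut.symm
            hzu hwt huz' (fun hh => hwK (hh ▸ htK))
      · by_cases hwv2 : G.Adj w v
        · by_cases hwb : G.Adj w b
          · exact noC4 h1 huv hwv2.symm hwb hub.symm
              (fun hh => hwu2 hh.symm) hbv huw' hvb'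
          · have hzb : G.Adj z b := hKclique hzK hbK (Ne.symm hbz)
            exact noC5 h1 huv hwv2.symm hzw.symm hzb hub.symm
              (fun hh => hwu2 hh.symm) hzu hzv hbv hwb
              huw' huz' hvz' hvb' (fun hh => hwK (hh ▸ hbK))
        · exact no2K2 h2 huv hzw hzu (fun hh => hwu2 hh.symm)
            hzv (fun hh => hwv2 hh.symm)
            huz' huw' hvz' hvw'
  refine ⟨(↑K : Set V)ᶜ, ↑K, ?_, hKclique, by simp, disjoint_compl_left⟩
  intro x hx y hy hxyne hxy
  simp only [Set.mem_compl_iff, Finset.mem_coe] at hx hy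
  have hnested : K.filter (fun z => ¬G.Adj x z) ⊆ K.filter (fun z => ¬G.Adj y z) ∨
      K.filter (fun z => ¬G.Adj y z) ⊆ K.filter (fun z => ¬G.Adj x z) := by
    by_contra hcon
    push_neg at hcon
    obtain ⟨a, haA, haB⟩ := Finset.not_subset.1 hcon.1
    obtain ⟨b, hbB, hbA⟩ := Finset.not_subset.1 hcon.2
    rw [Finset.mem_filter] at haA hbB
    have haK := haA.1
    have hbK := hbB.1
    have hya : G.Adj y a := by
      by_contra hnot
      exact haB (Finset.mem_filter.2 ⟨haK, hnot⟩)
    have hxb : G.Adj x b := by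
      by_contra hnot
      exact hbA (Finset.mem_filter.2 ⟨hbK, hnot⟩)
    have hab : a ≠ b := by
      intro hh
      subst hh
      exact haA.2 hxb
    exact noC4 h1 hxy hya (hKclique haK hbK hab) hxb.symm
      haA.2 hbB.2 (fun hh => hx (hh ▸ haK)) (fun hh => hy (hh ▸ hbK))
  rcases hnested with hs | hs
  · exact key x y hx hy hxy hs
  · exact key y x hy hx hxy.symm hs

theorem stmt1 {V : Type*} [Fintype V] (G : SimpleGraph V) :
    (IsChordal G ∧ IsChordal Gᶜ) ↔
      ∃ S K : Set V, IsIndepSet' G S ∧ G.IsClique K ∧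
        S ∪ K = Set.univ ∧ Disjoint S K := by
  constructor
  · rintro ⟨h1, h2⟩
    exact chordal_split h1 h2
  · rintro ⟨S, K, hS, hK, hcov, hdisj⟩
    constructor
    · exact split_chordal hS hK hcov
    · apply split_chordal (G := Gᶜ) (S := K) (K := S)
      · intro x hx y hy hne hadj
        rw [compl_adj] at hadj
        exact hadj.2 (hK hx hy hne)
      · intro x hx y hy hne
        rw [compl_adj]
        exact ⟨hne, hS hx hy hne⟩
      · rw [Set.union_comm]; exact hcov
end

section
/- Let G be a split graph whose vertex set is partitioned into an independent set S and a clique K, and let u, v, w be a triple of vertices of G with u ∈ K. Then {u, v, w} is not an asteroidal triple of G. -/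
open SimpleGraph Set

theorem stmt4 {V : Type*} (G : SimpleGraph V) (S K : Set V)
    (hS : IsIndepSet' G S) (hK : G.IsClique K)
    (hcov : S ∪ K = Set.univ) (hdisj : Disjoint S K)
    (u v w : V) (hu : u ∈ K) :
    ¬ IsAsteroidalTriple G u v w := by
  rintro ⟨huv, hvw, huw, p, q, r, hp, hq, hr, hpw, hqu, hru⟩
  -- Consider the path q from v to w avoiding the neighborhood of u.
  cases q with
  | nil => exact hvw rfl
  | cons h q' =>
    rename_i b
    have hvsup : v ∈ (SimpleGraph.Walk.cons h q').support :=
      SimpleGraph.Walk.start_mem_support _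
    have hbsup : b ∈ (SimpleGraph.Walk.cons h q').support := by
      simp [SimpleGraph.Walk.support_cons]
    have hvnu : ¬ G.Adj u v := hqu v hvsup
    have hbnu : ¬ G.Adj u b := hqu b hbsup
    -- v ∈ S
    have hvS : v ∈ S := by
      rcases (hcov ▸ Set.mem_univ v : v ∈ S ∪ K) with h1 | h1
      · exact h1
      · exact absurd (hK hu h1 (Ne.symm huv).symm) hvnu
    -- b ≠ u
    have hbne : b ≠ u := by
      rintro rfl
      exact hvnu h.symm
    -- b ∈ S
    have hbS : b ∈ S := by
      rcases (hcov ▸ Set.mem_univ b : b ∈ S ∪ K) with h1 | h1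
      · exact h1
      · exact absurd (hK hu h1 hbne.symm) hbnu
    exact hS hvS hbS h.ne h
end

section
/- If u, v, w are vertices of a graph G with N(u) ⊇ N(v) and v ∉ N(u), then {u, v, w} is not an asteroidal triple of G. -/
open SimpleGraph Set

theorem stmt5 {V : Type*} (G : SimpleGraph V) (u v w : V)
    (h1 : G.neighborSet v ⊆ G.neighborSet u) (h2 : v ∉ G.neighborSet u) :
    ¬ IsAsteroidalTriple G u v w := by
  rintro ⟨huv, hvw, huw, p, q, r, hp, hq, hr, hpw, hqu, hrv⟩
  cases q with
  | nil => exact hvw rfl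
  | cons h q' =>
    rename_i b
    have hb : b ∈ G.neighborSet v := h
    have : G.Adj u b := h1 hb
    exact hqu b (by simp [SimpleGraph.Walk.support_cons]) this
end

section
/- Suppose a graph G has a proper coloring with χ(G) color classes V_1, ..., V_{χ(G)}, where V_i = {v_{i,1}, ..., v_{i,n(i)}}, and for each vertex v_{i,j} there is a set X_{i,j} ⊆ V(G) \ V_i with N(v_{i,j}) ⊆ X_{i,j}, such that (i) for each i there is k(i) with X_{i,1} ⊇ ... ⊇ X_{i,k(i)} and X_{i,k(i)+1} ⊆ ... ⊆ X_{i,n(i)}, and (ii) for any pair of nonadjacent vertices v_{i,s}, v_{j,t} with i ≠ j, either v_{i,s} ∉ X_{j,t} or v_{j,t} ∉ X_{i,s}. Then box(G) ≤ χ(G). -/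
open SimpleGraph Set

noncomputable def auxPos (nn k j : ℕ) : ℝ :=
  if j ≤ k then -((j : ℝ) + 1) else (nn : ℝ) - (j : ℝ)

open Classical in
noncomputable def auxT {V : Type*} {c : ℕ} {n : Fin c → ℕ}
    (X : (i : Fin c) → Fin (n i) → Set V) (K : (i : Fin c) → ℕ)
    (x : V) (d : Fin c) : Finset ℝ :=
  insert 0 ((Finset.univ.filter (fun s : Fin (n d) => x ∈ X d s)).image
    (fun s => auxPos (n d) (K d) (s : ℕ)))

lemma auxT_ne {V : Type*} {c : ℕ} {n : Fin c → ℕ}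
    (X : (i : Fin c) → Fin (n i) → Set V) (K : (i : Fin c) → ℕ)
    (x : V) (d : Fin c) : (auxT X K x d).Nonempty :=
  ⟨0, Finset.mem_insert_self _ _⟩

open Classical in
lemma auxT_mem_iff {V : Type*} {c : ℕ} {n : Fin c → ℕ}
    (X : (i : Fin c) → Fin (n i) → Set V) (K : (i : Fin c) → ℕ)
    (x : V) (d : Fin c) (r : ℝ) :
    r ∈ auxT X K x d ↔ r = 0 ∨ ∃ s : Fin (n d), x ∈ X d s ∧ auxPos (n d) (K d) (s : ℕ) = r := by
  simp [auxT]

noncomputable def auxLo {V : Type*} {c : ℕ} {n : Fin c → ℕ}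
    (X : (i : Fin c) → Fin (n i) → Set V) (K : (i : Fin c) → ℕ)
    (F1 : V → Fin c) (q : V → ℝ) (x : V) (d : Fin c) : ℝ :=
  if F1 x = d then q x else (auxT X K x d).min' (auxT_ne X K x d)

noncomputable def auxHi {V : Type*} {c : ℕ} {n : Fin c → ℕ}
    (X : (i : Fin c) → Fin (n i) → Set V) (K : (i : Fin c) → ℕ)
    (F1 : V → Fin c) (q : V → ℝ) (x : V) (d : Fin c) : ℝ :=
  if F1 x = d then q x else (auxT X K x d).max' (auxT_ne X K x d)

lemma auxPos_neg {nn k a : ℕ} (h : a ≤ k) : auxPos nn k a < 0 := by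
  rw [auxPos, if_pos h]
  have : (0:ℝ) ≤ (a:ℝ) := Nat.cast_nonneg _
  linarith

lemma auxPos_pos {nn k a : ℕ} (h : ¬ a ≤ k) (h2 : a < nn) : 0 < auxPos nn k a := by
  rw [auxPos, if_neg h]
  have : (a:ℝ) + 1 ≤ (nn:ℝ) := by exact_mod_cast Nat.succ_le_of_lt h2
  linarith

lemma auxPos_inj {nn k a b : ℕ} (ha : a < nn) (hb : b < nn)
    (h : auxPos nn k a = auxPos nn k b) : a = b := by
  by_cases h1 : a ≤ k <;> by_cases h2 : b ≤ k
  · rw [auxPos, auxPos, if_pos h1, if_pos h2] at h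
    have : (a:ℝ) + 1 = (b:ℝ) + 1 := neg_injective h
    have : (a:ℝ) = b := by linarith
    exact_mod_cast this
  · have := auxPos_neg (nn := nn) h1
    have := auxPos_pos (nn := nn) h2 hb
    linarith
  · have := auxPos_pos (nn := nn) h1 ha
    have := auxPos_neg (nn := nn) h2
    linarith
  · rw [auxPos, auxPos, if_neg h1, if_neg h2] at h
    have : (a:ℝ) = b := by linarith
    exact_mod_cast this

theorem stmt6 {V : Type*} [Fintype V] (G : SimpleGraph V)
    (c : ℕ) (n : Fin c → ℕ) (v : (i : Fin c) → Fin (n i) → V)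
    (hchi : G.chromaticNumber = (c : ℕ∞))
    (hinj : Function.Injective fun p : (i : Fin c) × Fin (n i) => v p.1 p.2)
    (hcov : ∀ x : V, ∃ i j, v i j = x)
    (hindep : ∀ i, IsIndepSet' G (Set.range (v i)))
    (X : (i : Fin c) → Fin (n i) → Set V)
    (hXdisj : ∀ i j, X i j ∩ Set.range (v i) = ∅)
    (hXnbr : ∀ i j, G.neighborSet (v i j) ⊆ X i j)
    (hchain : ∀ i, ∃ k : Fin (n i),
      (∀ s t : Fin (n i), s ≤ t → t ≤ k → X i t ⊆ X i s) ∧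
      (∀ s t : Fin (n i), k < s → s ≤ t → X i s ⊆ X i t))
    (hpair : ∀ (i j : Fin c) (s : Fin (n i)) (t : Fin (n j)), i ≠ j →
      ¬ G.Adj (v i s) (v j t) → v i s ∉ X j t ∨ v j t ∉ X i s) :
    boxicity G ≤ c := by
  classical
  choose fi fj hf using hcov
  choose K hK1 hK2 using hchain
  set Kn : (i : Fin c) → ℕ := fun i => (K i : ℕ) with hKn
  set q : V → ℝ := fun x => auxPos (n (fi x)) (Kn (fi x)) ((fj x : ℕ)) with hq
  -- membership in the finset
  have hmemT : ∀ (d : Fin c) (x : V) (s : Fin (n d)), x ∈ X d s →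
      auxPos (n d) (Kn d) (s : ℕ) ∈ auxT X Kn x d := by
    intro d x s hx
    exact (auxT_mem_iff X Kn x d _).2 (Or.inr ⟨s, hx, rfl⟩)
  have hzero : ∀ (x : V) (d : Fin c), fi x ≠ d →
      (0:ℝ) ∈ Set.Icc (auxLo X Kn fi q x d) (auxHi X Kn fi q x d) := by
    intro x d h
    rw [Set.mem_Icc, auxLo, auxHi, if_neg h, if_neg h]
    exact ⟨Finset.min'_le _ _ (Finset.mem_insert_self _ _),
      Finset.le_max' _ _ (Finset.mem_insert_self _ _)⟩
  have hmem_int : ∀ (d : Fin c) (x : V) (s : Fin (n d)), fi x ≠ d → x ∈ X d s →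
      auxPos (n d) (Kn d) (s : ℕ) ∈ Set.Icc (auxLo X Kn fi q x d) (auxHi X Kn fi q x d) := by
    intro d x s h hx
    rw [Set.mem_Icc, auxLo, auxHi, if_neg h, if_neg h]
    exact ⟨Finset.min'_le _ _ (hmemT d x s hx), Finset.le_max' _ _ (hmemT d x s hx)⟩
  have hexcl : ∀ (d : Fin c) (x : V) (s : Fin (n d)), fi x ≠ d → x ∉ X d s →
      auxPos (n d) (Kn d) (s : ℕ) ∉ Set.Icc (auxLo X Kn fi q x d) (auxHi X Kn fi q x d) := by
    intro d x s h hx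
    rw [Set.mem_Icc, auxLo, auxHi, if_neg h, if_neg h]
    by_cases hs : (s : ℕ) ≤ Kn d
    · -- the point lies strictly left of the whole finset
      rintro ⟨hle, -⟩
      have hlt : auxPos (n d) (Kn d) (s : ℕ) < (auxT X Kn x d).min' (auxT_ne X Kn x d) := by
        rw [Finset.lt_min'_iff]
        intro r hr
        rcases (auxT_mem_iff X Kn x d r).1 hr with rfl | ⟨s', hs'X, rfl⟩
        · exact auxPos_neg hs
        · by_cases hs'k : (s' : ℕ) ≤ Kn d
          · have hlt : (s' : ℕ) < (s : ℕ) := by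
              by_contra hge
              push_neg at hge
              exact hx (hK1 d s s' (Fin.le_def.2 hge) (Fin.le_def.2 hs'k) hs'X)
            rw [auxPos, auxPos, if_pos hs, if_pos hs'k]
            have : ((s':ℕ):ℝ) < ((s:ℕ):ℝ) := by exact_mod_cast hlt
            linarith
          · have h1 := auxPos_neg (nn := n d) hs
            have h2 := auxPos_pos (nn := n d) (k := Kn d) hs'k s'.isLt
            linarith
      linarith
    · rintro ⟨-, hle⟩
      have hlt : (auxT X Kn x d).max' (auxT_ne X Kn x d) < auxPos (n d) (Kn d) (s : ℕ) := by
        rw [Finset.max'_lt_iff]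
        intro r hr
        rcases (auxT_mem_iff X Kn x d r).1 hr with rfl | ⟨s', hs'X, rfl⟩
        · exact auxPos_pos hs s.isLt
        · by_cases hs'k : (s' : ℕ) ≤ Kn d
          · have h1 := auxPos_neg (nn := n d) hs'k
            have h2 := auxPos_pos (nn := n d) (k := Kn d) hs s.isLt
            linarith
          · have hlt : (s : ℕ) < (s' : ℕ) := by
              by_contra hge
              push_neg at hge
              push_neg at hs
              exact hx (hK2 d s' s (Fin.lt_def.2 (Nat.lt_of_not_le hs'k)) (Fin.le_def.2 hge) hs'X)
            rw [auxPos, auxPos, if_neg hs, if_neg hs'k]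
            have : ((s:ℕ):ℝ) < ((s':ℕ):ℝ) := by exact_mod_cast hlt
            linarith
      linarith
  have hbox : HasBoxRep G c := by
    refine ⟨auxLo X Kn fi q, auxHi X Kn fi q, ?_⟩
    intro u w huw
    constructor
    · intro hGuw
      intro d
      have hu : v (fi u) (fj u) = u := hf u
      have hw : v (fi w) (fj w) = w := hf w
      have hij : fi u ≠ fi w := by
        intro he
        refine (hindep (fi u) ⟨fj u, hu⟩ ?_ huw) hGuw
        rw [he]
        exact ⟨fj w, hw⟩
      by_cases hdu : fi u = d
      · subst hdu
        refine ⟨q u, Set.mem_inter ?_ ?_⟩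
        · rw [Set.mem_Icc, auxLo, auxHi, if_pos rfl, if_pos rfl]
          exact ⟨le_rfl, le_rfl⟩
        · have hwX : w ∈ X (fi u) (fj u) := by
            apply hXnbr
            rw [SimpleGraph.mem_neighborSet, hu]
            exact hGuw
          have := hmem_int (fi u) w (fj u) (fun he => hij he.symm) hwX
          simp only [hq]
          exact this
      · by_cases hdw : fi w = d
        · subst hdw
          refine ⟨q w, Set.mem_inter ?_ ?_⟩
          · have huX : u ∈ X (fi w) (fj w) := by
              apply hXnbr
              rw [SimpleGraph.mem_neighborSet, hw]
              exact hGuw.symm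
            have := hmem_int (fi w) u (fj w) hdu huX
            simp only [hq]
            exact this
          · rw [Set.mem_Icc, auxLo, auxHi, if_pos rfl, if_pos rfl]
            exact ⟨le_rfl, le_rfl⟩
        · exact ⟨0, Set.mem_inter (hzero u d hdu) (hzero w d hdw)⟩
    · intro hall
      by_contra hnadj
      have hu : v (fi u) (fj u) = u := hf u
      have hw : v (fi w) (fj w) = w := hf w
      by_cases hij : fi u = fi w
      · -- both intervals in dim (fi u) are points; equal points force u = w
        obtain ⟨r, hr1, hr2⟩ := hall (fi u)
        rw [Set.mem_Icc, auxLo, auxHi, if_pos rfl, if_pos rfl] at hr1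
        rw [Set.mem_Icc, auxLo, auxHi, if_pos hij.symm, if_pos hij.symm] at hr2
        have hqq : q u = q w := by
          have h1 : r = q u := le_antisymm hr1.2 hr1.1
          have h2 : r = q w := le_antisymm hr2.2 hr2.1
          rw [← h1, ← h2]
        simp only [hq] at hqq
        have e1 : n (fi w) = n (fi u) := by rw [hij]
        have e2 : Kn (fi w) = Kn (fi u) := by rw [hij]
        obtain ⟨bw, hbw⟩ : ∃ b : ℕ, ((fj w : ℕ)) = b := ⟨_, rfl⟩
        have hbwlt : bw < n (fi u) := by rw [← e1, ← hbw]; exact (fj w).isLt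
        rw [hbw, e1, e2] at hqq
        have hval : ((fj u : ℕ)) = ((fj w : ℕ)) := by
          rw [hbw]
          exact auxPos_inj (fj u).isLt hbwlt hqq
        have hsig : (⟨fi u, fj u⟩ : (i : Fin c) × Fin (n i)) = ⟨fi w, fj w⟩ :=
          Sigma.ext hij ((Fin.heq_ext_iff (k := n (fi u)) (l := n (fi w)) (by rw [hij])).2 hval)
        have : u = w := by
          rw [← hu, ← hw]
          exact congrArg (fun p : (i : Fin c) × Fin (n i) => v p.1 p.2) hsig
        exact huw this
      · have hnadj' : ¬ G.Adj (v (fi u) (fj u)) (v (fi w) (fj w)) := by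
          rw [hu, hw]; exact hnadj
        rcases hpair (fi u) (fi w) (fj u) (fj w) hij hnadj' with hno | hno
        · rw [hu] at hno
          obtain ⟨r, hr1, hr2⟩ := hall (fi w)
          rw [Set.mem_Icc, auxLo, auxHi, if_pos rfl, if_pos rfl] at hr2
          have h2 : r = q w := le_antisymm hr2.2 hr2.1
          rw [h2] at hr1
          refine hexcl (fi w) u (fj w) hij hno ?_
          simp only [hq] at hr1
          exact hr1
        · rw [hw] at hno
          obtain ⟨r, hr1, hr2⟩ := hall (fi u)
          rw [Set.mem_Icc, auxLo, auxHi, if_pos rfl, if_pos rfl] at hr1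
          have h1 : r = q u := le_antisymm hr1.2 hr1.1
          rw [h1] at hr2
          refine hexcl (fi u) w (fj u) (fun he => hij he.symm) hno ?_
          simp only [hq] at hr2
          exact hr2
  exact Nat.sInf_le hbox
end

section
/- Suppose a graph G has a proper coloring with χ(G) color classes V_1, ..., V_{χ(G)} such that for each i, writing V_i = {v_{i,1}, ..., v_{i,n(i)}}, there exists k(i) with N(v_{i,1}) ⊇ ... ⊇ N(v_{i,k(i)}) and N(v_{i,k(i)+1}) ⊆ ... ⊆ N(v_{i,n(i)}). Then box(G) ≤ χ(G). -/
open SimpleGraph Set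

/-
Place each colour class `V_i` on its own axis: the vertices `v_{i,1}, …, v_{i,k(i)}` at the
positive points `1, …, k(i)`, the remaining ones at negative points in increasing order, so that
neighbourhoods shrink away from the origin. Every vertex outside `V_i` gets the smallest interval
containing `0` and the points of its neighbours in `V_i`; by the nesting it contains no other
point of `V_i`. Each axis is then a supergraph of `G` in which `V_i` sees exactly its
`G`-neighbours, and since the classes cover `V`, these axes together represent `G`.
-/

namespace SimpleGraph

variable {V : Type*} (G : SimpleGraph V)

structure IsOutwardNested (S : Set V) (pos : V → ℝ) : Prop where
  injOn : S.InjOn pos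
  ne_zero : ∀ y ∈ S, pos y ≠ 0
  neighborSet_anti_of_pos : ∀ y ∈ S, ∀ y' ∈ S, 0 < pos y → pos y ≤ pos y' →
    G.neighborSet y' ⊆ G.neighborSet y
  neighborSet_mono_of_neg : ∀ y ∈ S, ∀ y' ∈ S, pos y' ≤ pos y → pos y < 0 →
    G.neighborSet y' ⊆ G.neighborSet y

section NestedIntervals

variable (S : Finset V) (pos : V → ℝ)

open Classical in
noncomputable def nestLo (x : V) : ℝ :=
  if x ∈ S then pos x
  else (insert 0 ((S.filter (G.Adj x)).image pos)).min' (Finset.insert_nonempty _ _)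

open Classical in
noncomputable def nestHi (x : V) : ℝ :=
  if x ∈ S then pos x
  else (insert 0 ((S.filter (G.Adj x)).image pos)).max' (Finset.insert_nonempty _ _)

variable {G S pos}

theorem nestLo_of_mem {x : V} (hx : x ∈ S) : G.nestLo S pos x = pos x := by
  simp [nestLo, hx]

theorem nestHi_of_mem {x : V} (hx : x ∈ S) : G.nestHi S pos x = pos x := by
  simp [nestHi, hx]

theorem zero_mem_nestInterval {x : V} (hx : x ∉ S) :
    (0 : ℝ) ∈ Icc (G.nestLo S pos x) (G.nestHi S pos x) := by
  simp only [nestLo, nestHi, hx, if_false, mem_Icc]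
  exact ⟨Finset.min'_le _ _ (Finset.mem_insert_self _ _),
    Finset.le_max' _ _ (Finset.mem_insert_self _ _)⟩

theorem pos_mem_nestInterval_of_adj {x y : V} (hx : x ∉ S) (hy : y ∈ S) (hxy : G.Adj x y) :
    pos y ∈ Icc (G.nestLo S pos x) (G.nestHi S pos x) := by
  classical
  have hmem : pos y ∈ insert 0 ((S.filter (G.Adj x)).image pos) :=
    Finset.mem_insert_of_mem (Finset.mem_image_of_mem _ (Finset.mem_filter.2 ⟨hy, hxy⟩))
  simp only [nestLo, nestHi, hx, if_false, mem_Icc]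
  exact ⟨Finset.min'_le _ _ hmem, Finset.le_max' _ _ hmem⟩

theorem adj_of_pos_mem_nestInterval (hS : G.IsOutwardNested S pos) {x y : V} (hx : x ∉ S)
    (hy : y ∈ S) (hmem : pos y ∈ Icc (G.nestLo S pos x) (G.nestHi S pos x)) : G.Adj x y := by
  classical
  by_contra hxy
  -- A neighbour `y'` of `x` placed beyond `y` would have `N(y') ⊆ N(y)`, so `x ∼ y`.
  have hbeyond : ∀ y' ∈ S.filter (G.Adj x),
      (0 < pos y → pos y' < pos y) ∧ (pos y < 0 → pos y < pos y') := by
    intro y' hy'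
    obtain ⟨hy'S, hxy'⟩ := Finset.mem_filter.1 hy'
    refine ⟨fun h => lt_of_not_ge fun hle => hxy ?_, fun h => lt_of_not_ge fun hle => hxy ?_⟩
    · exact (hS.neighborSet_anti_of_pos y hy y' hy'S h hle hxy'.symm).symm
    · exact (hS.neighborSet_mono_of_neg y hy y' hy'S hle h hxy'.symm).symm
  simp only [nestLo, nestHi, hx, if_false, mem_Icc] at hmem
  rcases (hS.ne_zero y hy).lt_or_gt with hneg | hpos
  · refine hmem.1.not_gt ((Finset.lt_min'_iff _ _).2 fun z hz => ?_)
    rcases Finset.mem_insert.1 hz with rfl | hz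
    · exact hneg
    · obtain ⟨y', hy', rfl⟩ := Finset.mem_image.1 hz
      exact (hbeyond y' hy').2 hneg
  · refine hmem.2.not_gt ((Finset.max'_lt_iff _ _).2 fun z hz => ?_)
    rcases Finset.mem_insert.1 hz with rfl | hz
    · exact hpos
    · obtain ⟨y', hy', rfl⟩ := Finset.mem_image.1 hz
      exact (hbeyond y' hy').1 hpos

theorem nestInterval_inter_nonempty_of_adj (hS : IsIndepSet' G (S : Set V)) {u w : V}
    (huw : G.Adj u w) :
    (Icc (G.nestLo S pos u) (G.nestHi S pos u) ∩
      Icc (G.nestLo S pos w) (G.nestHi S pos w)).Nonempty := by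
  by_cases hu : u ∈ S <;> by_cases hw : w ∈ S
  · exact absurd huw (hS hu hw huw.ne)
  · refine ⟨pos u, ?_, pos_mem_nestInterval_of_adj hw hu huw.symm⟩
    simp [nestLo_of_mem hu, nestHi_of_mem hu]
  · refine ⟨pos w, pos_mem_nestInterval_of_adj hu hw huw, ?_⟩
    simp [nestLo_of_mem hw, nestHi_of_mem hw]
  · exact ⟨0, zero_mem_nestInterval hu, zero_mem_nestInterval hw⟩

theorem adj_of_nestInterval_inter_nonempty (hS : G.IsOutwardNested S pos) {u w : V}
    (hu : u ∈ S) (huw : u ≠ w)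
    (h : (Icc (G.nestLo S pos u) (G.nestHi S pos u) ∩
      Icc (G.nestLo S pos w) (G.nestHi S pos w)).Nonempty) : G.Adj u w := by
  obtain ⟨z, hzu, hzw⟩ := h
  rw [nestLo_of_mem hu, nestHi_of_mem hu, Icc_self, mem_singleton_iff] at hzu
  subst hzu
  by_cases hw : w ∈ S
  · rw [nestLo_of_mem hw, nestHi_of_mem hw, Icc_self, mem_singleton_iff] at hzw
    exact absurd (hS.injOn hu hw hzw) huw
  · exact (adj_of_pos_mem_nestInterval hS hw hu hzw).symm

end NestedIntervals

theorem hasBoxRep_of_isOutwardNested {c : ℕ} (S : Fin c → Finset V) (pos : Fin c → V → ℝ)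
    (hcov : ∀ x, ∃ i, x ∈ S i) (hindep : ∀ i, IsIndepSet' G (S i : Set V))
    (hnest : ∀ i, G.IsOutwardNested (S i) (pos i)) : HasBoxRep G c :=
  ⟨fun x i => G.nestLo (S i) (pos i) x, fun x i => G.nestHi (S i) (pos i) x, fun u w huw =>
    ⟨fun h i => nestInterval_inter_nonempty_of_adj (hindep i) h, fun h => by
      obtain ⟨i, hi⟩ := hcov u
      exact adj_of_nestInterval_inter_nonempty (hnest i) hi huw (h i)⟩⟩

end SimpleGraph

section ChainPos

variable {m : ℕ} (k : Fin m)

def chainPos (j : Fin m) : ℝ :=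
  if j ≤ k then (j : ℝ) + 1 else (j : ℝ) - m

variable {k}

theorem zero_lt_chainPos_iff {j : Fin m} : 0 < chainPos k j ↔ j ≤ k := by
  have : (j : ℝ) < m := by exact_mod_cast j.isLt
  unfold chainPos
  split_ifs with h
  · simp only [h, iff_true]; positivity
  · simp only [h, iff_false, not_lt]; linarith

theorem chainPos_lt_zero_iff {j : Fin m} : chainPos k j < 0 ↔ k < j := by
  have : (j : ℝ) < m := by exact_mod_cast j.isLt
  unfold chainPos
  split_ifs with h
  · simp only [not_lt.2 h, iff_false, not_lt]; positivity
  · simp only [not_le.1 h, iff_true]; linarith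

theorem chainPos_le_chainPos_iff {j j' : Fin m} (hside : j ≤ k ↔ j' ≤ k) :
    chainPos k j ≤ chainPos k j' ↔ j ≤ j' := by
  rw [Fin.le_def, ← Nat.cast_le (α := ℝ)]
  unfold chainPos
  split_ifs <;> first | tauto | constructor <;> intro <;> linarith

theorem chainPos_injective : Function.Injective (chainPos k) := by
  intro j j' h
  have hside : j ≤ k ↔ j' ≤ k := by rw [← zero_lt_chainPos_iff, h, zero_lt_chainPos_iff]
  exact le_antisymm ((chainPos_le_chainPos_iff hside).1 h.le)
    ((chainPos_le_chainPos_iff hside.symm).1 h.ge)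

end ChainPos

theorem SimpleGraph.isOutwardNested_range_of_chain {V : Type*} (G : SimpleGraph V) {m : ℕ}
    {vv : Fin m → V} (k : Fin m)
    (hdown : ∀ s t : Fin m, s ≤ t → t ≤ k → G.neighborSet (vv t) ⊆ G.neighborSet (vv s))
    (hup : ∀ s t : Fin m, k < s → s ≤ t → G.neighborSet (vv s) ⊆ G.neighborSet (vv t))
    {pos : V → ℝ} (hpos : ∀ j, pos (vv j) = chainPos k j) :
    G.IsOutwardNested (range vv) pos where
  injOn := by
    rintro _ ⟨j, rfl⟩ _ ⟨j', rfl⟩ h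
    rw [hpos, hpos] at h
    rw [chainPos_injective h]
  ne_zero := by
    rintro _ ⟨j, rfl⟩ h
    rw [hpos] at h
    rcases le_or_gt j k with hj | hj
    · exact (zero_lt_chainPos_iff.2 hj).ne' h
    · exact (chainPos_lt_zero_iff.2 hj).ne h
  neighborSet_anti_of_pos := by
    rintro _ ⟨j, rfl⟩ _ ⟨j', rfl⟩ h hle
    rw [hpos] at h
    rw [hpos, hpos] at hle
    have hj := zero_lt_chainPos_iff.1 h
    have hj' := zero_lt_chainPos_iff.1 (h.trans_le hle)
    exact hdown j j' ((chainPos_le_chainPos_iff (by tauto)).1 hle) hj'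
  neighborSet_mono_of_neg := by
    rintro _ ⟨j, rfl⟩ _ ⟨j', rfl⟩ hle h
    rw [hpos] at h
    rw [hpos, hpos] at hle
    have hj := chainPos_lt_zero_iff.1 h
    have hj' := chainPos_lt_zero_iff.1 (hle.trans_lt h)
    exact hup j' j hj' ((chainPos_le_chainPos_iff (by simp [not_le.2 hj, not_le.2 hj'])).1 hle)

theorem stmt7_general {V : Type*} (G : SimpleGraph V)
    (c : ℕ) (n : Fin c → ℕ) (v : (i : Fin c) → Fin (n i) → V)
    (hinj : Function.Injective fun p : (i : Fin c) × Fin (n i) => v p.1 p.2)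
    (hcov : ∀ x : V, ∃ i j, v i j = x)
    (hindep : ∀ i, IsIndepSet' G (Set.range (v i)))
    (hchain : ∀ i, ∃ k : Fin (n i),
      (∀ s t : Fin (n i), s ≤ t → t ≤ k →
        G.neighborSet (v i t) ⊆ G.neighborSet (v i s)) ∧
      (∀ s t : Fin (n i), k < s → s ≤ t →
        G.neighborSet (v i s) ⊆ G.neighborSet (v i t))) :
    boxicity G ≤ c := by
  classical
  choose k hdown hup using hchain
  let e := Equiv.ofBijective _ ⟨hinj, fun x => (hcov x).elim fun i ⟨j, h⟩ => ⟨⟨i, j⟩, h⟩⟩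
  let pos : V → ℝ := fun x => chainPos (k (e.symm x).1) (e.symm x).2
  have hpos : ∀ i j, pos (v i j) = chainPos (k i) j := fun i j =>
    congrArg (fun p : (i : Fin c) × Fin (n i) => chainPos (k p.1) p.2)
      (e.symm_apply_apply ⟨i, j⟩)
  refine Nat.sInf_le (G.hasBoxRep_of_isOutwardNested (fun i => Finset.univ.image (v i))
    (fun _ => pos) (fun x => ?_) (fun i => ?_) (fun i => ?_))
  · obtain ⟨i, j, rfl⟩ := hcov x
    exact ⟨i, Finset.mem_image_of_mem _ (Finset.mem_univ j)⟩
  · simpa using hindep i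
  · simpa using G.isOutwardNested_range_of_chain (k i) (hdown i) (hup i) (hpos i)

theorem stmt7 {V : Type*} [Fintype V] (G : SimpleGraph V)
    (c : ℕ) (n : Fin c → ℕ) (v : (i : Fin c) → Fin (n i) → V)
    (hchi : G.chromaticNumber = (c : ℕ∞))
    (hinj : Function.Injective fun p : (i : Fin c) × Fin (n i) => v p.1 p.2)
    (hcov : ∀ x : V, ∃ i j, v i j = x)
    (hindep : ∀ i, IsIndepSet' G (Set.range (v i)))
    (hchain : ∀ i, ∃ k : Fin (n i),
      (∀ s t : Fin (n i), s ≤ t → t ≤ k →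
        G.neighborSet (v i t) ⊆ G.neighborSet (v i s)) ∧
      (∀ s t : Fin (n i), k < s → s ≤ t →
        G.neighborSet (v i s) ⊆ G.neighborSet (v i t))) :
    boxicity G ≤ c :=
  stmt7_general G c n v hinj hcov hindep hchain
end

section
/- For every complete multipartite graph G, box(G) ≤ χ(G). -/
open SimpleGraph Set

theorem stmt8 {ι : Type*} [Fintype ι] (Vp : ι → Type*) [∀ i, Fintype (Vp i)] :
    (boxicity (completeMultipartiteGraph Vp) : ℕ∞) ≤
      (completeMultipartiteGraph Vp).chromaticNumber := by
  classical
  set S : Finset ι := Finset.univ.filter (fun i => Nonempty (Vp i)) with hS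
  set n := S.card with hn
  let e : S ≃ Fin n := S.equivFin
  have hmem : ∀ v : Σ i, Vp i, v.1 ∈ S := by
    intro v; simp [hS]; exact ⟨v.2⟩
  let d : (Σ i, Vp i) → Fin n := fun v => e ⟨v.1, hmem v⟩
  have hd : ∀ u v : Σ i, Vp i, d u = d v → u.1 = v.1 := by
    intro u v h
    exact congrArg Subtype.val (e.injective h)
  let M : ℝ := Fintype.card (Σ i, Vp i)
  let x : (Σ i, Vp i) → ℝ := fun v => (Fintype.equivFin (Vp v.1) v.2 : ℕ)
  have hx0 : ∀ v, 0 ≤ x v := fun v => Nat.cast_nonneg _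
  have hxM : ∀ v, x v ≤ M := by
    intro v
    have h1 : (Fintype.equivFin (Vp v.1) v.2 : ℕ) < Fintype.card (Vp v.1) :=
      (Fintype.equivFin (Vp v.1) v.2).2
    have h2 : Fintype.card (Vp v.1) ≤ Fintype.card (Σ i, Vp i) :=
      Fintype.card_le_of_injective (fun a => ⟨v.1, a⟩) (fun a b h => by simpa using h)
    show ((Fintype.equivFin (Vp v.1) v.2 : ℕ) : ℝ) ≤ (Fintype.card (Σ i, Vp i) : ℝ)
    exact_mod_cast h1.le.trans h2
  have hM0 : (0:ℝ) ≤ M := Nat.cast_nonneg _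
  have hxinj : ∀ u v : Σ i, Vp i, u ≠ v → u.1 = v.1 → x u ≠ x v := by
    rintro ⟨i, a⟩ ⟨j, b⟩ huv h
    dsimp at h; subst h
    intro hx
    apply huv
    have : (Fintype.equivFin (Vp i) a : ℕ) = (Fintype.equivFin (Vp i) b : ℕ) := by
      simp only [x] at hx
      exact_mod_cast hx
    have := (Fintype.equivFin (Vp i)).injective (Fin.ext this)
    exact congrArg _ this
  -- box representation
  have hrep : HasBoxRep (completeMultipartiteGraph Vp) n := by
    refine ⟨fun v i => if i = d v then x v else 0,
            fun v i => if i = d v then x v else M, ?_⟩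
    intro u v huv
    constructor
    · intro hadj i
      have hadj' : u.1 ≠ v.1 := hadj
      have hne : d u ≠ d v := fun h => hadj' (hd u v h)
      by_cases h1 : i = d u
      · have h2 : i ≠ d v := h1 ▸ hne
        exact ⟨x u, by simp [h1, h2, if_neg hne, Set.mem_Icc, hx0 u, hxM u]⟩
      · by_cases h2 : i = d v
        · exact ⟨x v, by simp [h1, h2, if_neg hne.symm, Set.mem_Icc, hx0 v, hxM v]⟩
        · exact ⟨0, by simp [h1, h2, Set.mem_Icc, le_refl, hM0]⟩
    · intro hint
      by_contra hadj
      have hfst : u.1 = v.1 := by by_contra h; exact hadj h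
      have hdd : d u = d v := congrArg e (Subtype.ext hfst)
      obtain ⟨p, hp⟩ := hint (d u)
      simp only [Set.mem_inter_iff, Set.mem_Icc, if_pos rfl, hdd, if_pos rfl] at hp
      exact hxinj u v huv hfst (le_antisymm (hp.1.1.trans hp.2.2) (hp.2.1.trans hp.1.2))
  have hbox : boxicity (completeMultipartiteGraph Vp) ≤ n := Nat.sInf_le hrep
  -- clique of size n
  let c : ∀ i ∈ S, Vp i := fun i hi => Classical.choice (by simpa [hS] using hi)
  let f : S → Σ i, Vp i := fun p => ⟨p.1, c p.1 p.2⟩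
  have hfinj : Function.Injective f := by
    rintro ⟨i, hi⟩ ⟨j, hj⟩ h
    have : i = j := congrArg Sigma.fst h
    exact Subtype.ext this
  let s : Finset (Σ i, Vp i) := S.attach.image f
  have hcard : s.card = n := by
    rw [Finset.card_image_of_injective _ hfinj, Finset.card_attach]
  have hclique : (completeMultipartiteGraph Vp).IsClique s := by
    intro a ha b hb hab
    simp only [s, Finset.coe_image, Set.mem_image] at ha hb
    obtain ⟨⟨i, hi⟩, -, rfl⟩ := ha
    obtain ⟨⟨j, hj⟩, -, rfl⟩ := hb
    have : i ≠ j := fun h => hab (by subst h; rfl)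
    exact this
  have hchi : (n : ℕ∞) ≤ (completeMultipartiteGraph Vp).chromaticNumber := by
    have := hclique.card_le_chromaticNumber
    rwa [hcard] at this
  exact le_trans (by exact_mod_cast hbox) hchi
end

section
/- In the circulant graph G_{a,b} with a ≥ 2b and b ≥ 1, every set of b consecutive vertices {v, v+1, ..., v+b-1} (mod a) is an independent set, and the independence number of G_{a,b} equals b. -/
open SimpleGraph Set

lemma circG_adj_iff (a b : ℕ) (hab : 2 * b ≤ a) (hb : 1 ≤ b) (u v : ZMod a) (huv : u ≠ v) :
    (circG a b).Adj u v ↔ b ≤ (u - v).val ∧ (u - v).val ≤ a - b := by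
  have ha : 0 < a := by omega
  haveI : NeZero a := ⟨by omega⟩
  have hval : ∀ x y : ZMod a, (∃ c : ℕ, b ≤ c ∧ c ≤ a - b ∧ x = y + (c : ZMod a)) ↔
      (b ≤ (x - y).val ∧ (x - y).val ≤ a - b) := by
    intro x y
    constructor
    · rintro ⟨c, hc1, hc2, rfl⟩
      have : (y + (c : ZMod a) - y) = (c : ZMod a) := by ring
      rw [this, ZMod.val_cast_of_lt (by omega)]
      exact ⟨hc1, hc2⟩
    · rintro ⟨h1, h2⟩
      refine ⟨(x - y).val, h1, h2, ?_⟩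
      rw [ZMod.natCast_val, ZMod.cast_id]
      ring
  rw [circG, SimpleGraph.fromRel_adj]
  rw [hval, hval]
  have hne : u - v ≠ 0 := sub_ne_zero.mpr huv
  have hsub : (v - u).val = a - (u - v).val := by
    have : v - u = -(u - v) := by ring
    rw [this, ZMod.neg_val, if_neg hne]
  have h1 : 0 < (u - v).val := ZMod.val_pos.mpr hne
  have h2 : (u - v).val < a := ZMod.val_lt _
  rw [hsub]
  constructor
  · rintro ⟨_, h | h⟩
    · exact h
    · omega
  · intro h
    exact ⟨huv, Or.inl h⟩

lemma arc_indep (a b : ℕ) (hab : 2 * b ≤ a) (hb : 1 ≤ b) (v : ZMod a) :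
    IsIndepSet' (circG a b) {x | ∃ j : ℕ, j < b ∧ x = v + (j : ZMod a)} := by
  haveI : NeZero a := ⟨by omega⟩
  rintro x ⟨j, hj, rfl⟩ y ⟨k, hk, rfl⟩ hxy hadj
  rw [circG_adj_iff a b hab hb _ _ hxy] at hadj
  rcases le_or_gt k j with h | h
  · have heq : (v + (j : ZMod a)) - (v + (k : ZMod a)) = ((j - k : ℕ) : ZMod a) := by
      push_cast [h]; ring
    rw [heq, ZMod.val_cast_of_lt (by omega)] at hadj
    omega
  · have heq : (v + (j : ZMod a)) - (v + (k : ZMod a)) = -((k - j : ℕ) : ZMod a) := by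
      push_cast [h.le]; ring
    have hne : ((k - j : ℕ) : ZMod a) ≠ 0 := by
      intro h0
      rw [heq, h0, neg_zero] at hadj
      simp [ZMod.val_zero] at hadj
      omega
    rw [heq, ZMod.neg_val, if_neg hne, ZMod.val_cast_of_lt (by omega)] at hadj
    omega

theorem stmt9 (a b : ℕ) (hab : 2 * b ≤ a) (hb : 1 ≤ b) :
    (∀ v : ZMod a,
      IsIndepSet' (circG a b) {x | ∃ j : ℕ, j < b ∧ x = v + (j : ZMod a)}) ∧
    IsGreatest {m | ∃ s : Finset (ZMod a), s.card = m ∧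
      IsIndepSet' (circG a b) (↑s : Set (ZMod a))} b := by
  haveI : NeZero a := ⟨by omega⟩
  refine ⟨arc_indep a b hab hb, ?_, ?_⟩
  · -- b is achieved
    refine ⟨(Finset.range b).image (Nat.cast : ℕ → ZMod a), ?_, ?_⟩
    · rw [Finset.card_image_of_injOn, Finset.card_range]
      intro i hi j hj hij
      simp only [Finset.coe_range, Set.mem_Iio] at hi hj
      have := congrArg ZMod.val hij
      rwa [ZMod.val_cast_of_lt (by omega), ZMod.val_cast_of_lt (by omega)] at this
    · have h := arc_indep a b hab hb 0
      apply h.mono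
      intro x hx
      simp only [Finset.coe_image, Finset.coe_range, Set.mem_image, Set.mem_Iio] at hx
      obtain ⟨j, hj, rfl⟩ := hx
      exact ⟨j, hj, by rw [zero_add]⟩
  · -- upper bound
    rintro m ⟨s, rfl, hs⟩
    rcases s.eq_empty_or_nonempty with rfl | ⟨x₀, hx₀⟩
    · simp
    · have key : ∀ x ∈ s, x ≠ x₀ → (x - x₀).val < b ∨ a - b < (x - x₀).val := by
        intro x hx hne
        have h' : ¬ (circG a b).Adj x x₀ := hs (Finset.mem_coe.mpr hx) (Finset.mem_coe.mpr hx₀) hne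
        rw [circG_adj_iff a b hab hb _ _ hne] at h'
        omega
      set f : ZMod a → ℕ := fun x =>
        if (x - x₀).val < b then (x - x₀).val else (x - x₀).val - (a - b) with hf
      have hmaps : ∀ x ∈ s, f x ∈ Finset.range b := by
        intro x hx
        rcases eq_or_ne x x₀ with rfl | hne
        · simp [hf, hb, Nat.lt_of_lt_of_le hb (le_refl b)]
        · have h2 : (x - x₀).val < a := ZMod.val_lt _
          rcases key x hx hne with h | h
          · simp [hf, h, Finset.mem_range]
          · simp only [hf, Finset.mem_range]
            split <;> omega
      have hval_inj : ∀ x y : ZMod a, (x - x₀).val = (y - x₀).val → x = y := by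
        intro x y h
        have : x - x₀ = y - x₀ := by
          have := congrArg (Nat.cast : ℕ → ZMod a) h
          rwa [ZMod.natCast_val, ZMod.natCast_val, ZMod.cast_id, ZMod.cast_id] at this
        linear_combination this
      have contra : ∀ x ∈ s, ∀ y ∈ s, x ≠ y → (x - x₀).val < b →
          a - b < (y - x₀).val → (y - x₀).val = (x - x₀).val + (a - b) → False := by
        intro x hx y hy hne h1 h2 h3
        have heq : (y - x).val = a - b := by
          have hyx : y - x = ((a - b : ℕ) : ZMod a) := by
            have hy' : y - x₀ = (((y - x₀).val : ℕ) : ZMod a) := by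
              rw [ZMod.natCast_val, ZMod.cast_id]
            have hx' : x - x₀ = (((x - x₀).val : ℕ) : ZMod a) := by
              rw [ZMod.natCast_val, ZMod.cast_id]
            have h4 : y - x = (y - x₀) - (x - x₀) := by ring
            rw [h4, hy', hx', h3]
            push_cast
            ring
          rw [hyx, ZMod.val_cast_of_lt (by omega)]
        have hadj : ¬ (circG a b).Adj y x :=
          hs (Finset.mem_coe.mpr hy) (Finset.mem_coe.mpr hx) (Ne.symm hne)
        rw [circG_adj_iff a b hab hb _ _ (Ne.symm hne), heq] at hadj
        omega
      have hinj : ∀ x ∈ s, ∀ y ∈ s, f x = f y → x = y := by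
        intro x hx y hy hfxy
        by_contra hne
        have hxlt : (x - x₀).val < a := ZMod.val_lt _
        have hylt : (y - x₀).val < a := ZMod.val_lt _
        have hxc : x = x₀ ∨ ((x - x₀).val < b ∨ a - b < (x - x₀).val) := by
          rcases eq_or_ne x x₀ with rfl | h; exact Or.inl rfl; exact Or.inr (key x hx h)
        have hyc : y = x₀ ∨ ((y - x₀).val < b ∨ a - b < (y - x₀).val) := by
          rcases eq_or_ne y x₀ with rfl | h; exact Or.inl rfl; exact Or.inr (key y hy h)
        have hx0v : (x₀ - x₀ : ZMod a).val = 0 := by simp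
        have mixed : ((x - x₀).val < b ∧ a - b < (y - x₀).val ∧ (y - x₀).val = (x - x₀).val + (a - b))
            ∨ ((y - x₀).val < b ∧ a - b < (x - x₀).val ∧ (x - x₀).val = (y - x₀).val + (a - b)) := by
          simp only [hf] at hfxy
          rcases hxc with rfl | hxc'
          · rcases hyc with rfl | hyc'
            · exact absurd rfl hne
            · rw [hx0v] at hfxy ⊢
              rcases hyc' with h | h
              · rw [if_pos (by omega), if_pos h] at hfxy
                exact absurd (hval_inj _ _ (by omega)).symm hne
              · rw [if_pos (by omega), if_neg (by omega)] at hfxy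
                exact Or.inl ⟨by omega, h, by omega⟩
          · rcases hyc with rfl | hyc'
            · rw [hx0v] at hfxy ⊢
              rcases hxc' with h | h
              · rw [if_pos h, if_pos (by omega)] at hfxy
                exact absurd (hval_inj _ _ (by omega)) hne
              · rw [if_neg (by omega), if_pos (by omega)] at hfxy
                exact Or.inr ⟨by omega, h, by omega⟩
            · rcases hxc' with h1 | h1 <;> rcases hyc' with h2 | h2
              · rw [if_pos h1, if_pos h2] at hfxy
                exact absurd (hval_inj _ _ (by omega)) hne
              · rw [if_pos h1, if_neg (by omega)] at hfxy
                exact Or.inl ⟨h1, h2, by omega⟩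
              · rw [if_neg (by omega), if_pos h2] at hfxy
                exact Or.inr ⟨h2, h1, by omega⟩
              · rw [if_neg (by omega), if_neg (by omega)] at hfxy
                exact absurd (hval_inj _ _ (by omega)) hne
        rcases mixed with ⟨h1, h2, h3⟩ | ⟨h1, h2, h3⟩
        · exact contra x hx y hy hne h1 h2 h3
        · exact contra y hy x hx (Ne.symm hne) h1 h2 h3
      calc s.card ≤ (Finset.range b).card := Finset.card_le_card_of_injOn f hmaps hinj
        _ = b := Finset.card_range b
end

section
/- For integers n ≥ 2 and b ≥ 1, the chromatic number of the circulant graph G_{nb,b} equals n. -/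
open SimpleGraph Set

lemma div_ne_of_add_le {b x y : ℕ} (hb : 1 ≤ b) (h : x + b ≤ y) : x / b ≠ y / b := by
  have h1 : x / b + 1 = (x + b) / b := (Nat.add_div_right x hb).symm
  have h2 : (x + b) / b ≤ y / b := Nat.div_le_div_right h
  omega

theorem stmt11 (n b : ℕ) (hn : 2 ≤ n) (hb : 1 ≤ b) :
    (circG (n * b) b).chromaticNumber = (n : ℕ∞) := by
  set a := n * b with ha
  have hapos : 0 < a := by positivity
  haveI : NeZero a := ⟨hapos.ne'⟩
  have hba : b ≤ a := Nat.le_mul_of_pos_left b (by omega)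
  -- one-sided adjacency implies distinct colors
  have key : ∀ u v : ZMod a, (∃ c : ℕ, b ≤ c ∧ c ≤ a - b ∧ u = v + (c : ZMod a)) →
      u.val / b ≠ v.val / b := by
    rintro u v ⟨c, hc1, hc2, rfl⟩
    have hca : c < a := lt_of_le_of_lt hc2 (Nat.sub_lt hapos hb)
    have hcb : c + b ≤ a := by omega
    have hval : (v + (c : ZMod a)).val = (v.val + c) % a := by
      rw [ZMod.val_add, ZMod.val_cast_of_lt hca]
    have hv : v.val < a := ZMod.val_lt v
    by_cases hlt : v.val + c < a
    · rw [Nat.mod_eq_of_lt hlt] at hval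
      exact (div_ne_of_add_le hb (by omega)).symm
    · push_neg at hlt
      have : (v.val + c) % a = v.val + c - a := by
        rw [Nat.mod_eq_sub_mod hlt, Nat.mod_eq_of_lt (by omega)]
      rw [this] at hval
      exact div_ne_of_add_le hb (by omega)
  -- a proper coloring with n colors
  have hcol : (circG a b).Colorable n := by
    refine ⟨SimpleGraph.Coloring.mk
      (fun v => ⟨v.val / b, (Nat.div_lt_iff_lt_mul hb).2 (by exact ZMod.val_lt v : v.val < n * b)⟩)
      ?_⟩
    intro u v huv
    rw [circG, SimpleGraph.fromRel_adj] at huv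
    obtain ⟨hne, h | h⟩ := huv
    · simpa [Fin.ext_iff] using key u v h
    · simpa [Fin.ext_iff] using (key v u h).symm
  -- the clique {0, b, 2b, ..., (n-1)b}
  have hinj : Set.InjOn (fun i : ℕ => ((i * b : ℕ) : ZMod a)) (Finset.range n) := by
    intro i hi j hj hij
    simp only [Finset.coe_range, Set.mem_Iio] at hi hj
    have hvi : ((i * b : ℕ) : ZMod a).val = i * b :=
      ZMod.val_cast_of_lt (by exact Nat.mul_lt_mul_of_lt_of_le hi le_rfl (by omega))
    have hvj : ((j * b : ℕ) : ZMod a).val = j * b :=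
      ZMod.val_cast_of_lt (by exact Nat.mul_lt_mul_of_lt_of_le hj le_rfl (by omega))
    have : i * b = j * b := by rw [← hvi, ← hvj]; exact congrArg ZMod.val hij
    exact Nat.eq_of_mul_eq_mul_right (by omega) this
  have hadj : ∀ i j : ℕ, i < n → j < n → i < j →
      (circG a b).Adj ((i * b : ℕ) : ZMod a) ((j * b : ℕ) : ZMod a) := by
    intro i j hi hj hij
    rw [circG, SimpleGraph.fromRel_adj]
    refine ⟨fun h => ?_, Or.inr ⟨(j - i) * b, Nat.le_mul_of_pos_left b (by omega), ?_, ?_⟩⟩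
    · exact absurd (hinj (by simpa using hi) (by simpa using hj) h) (by omega)
    · have : (j - i) * b ≤ (n - 1) * b := Nat.mul_le_mul_right b (by omega)
      have h2 : (n - 1) * b = a - b := by
        rw [ha, Nat.sub_mul, Nat.one_mul]
      omega
    · have : i * b + (j - i) * b = j * b := by
        rw [← Nat.add_mul]; congr 1; omega
      rw [← Nat.cast_add, this]
  have hclique : (circG a b).IsClique
      ((Finset.range n).image (fun i : ℕ => ((i * b : ℕ) : ZMod a))) := by
    intro x hx y hy hxy
    simp only [Finset.coe_image, Finset.coe_range, Set.mem_image, Set.mem_Iio] at hx hy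
    obtain ⟨i, hi, rfl⟩ := hx
    obtain ⟨j, hj, rfl⟩ := hy
    have hij : i ≠ j := fun h => hxy (by rw [h])
    rcases lt_or_gt_of_ne hij with h | h
    · exact hadj i j hi hj h
    · exact (hadj j i hj hi h).symm
  have hcard : ((Finset.range n).image (fun i : ℕ => ((i * b : ℕ) : ZMod a))).card = n := by
    rw [Finset.card_image_of_injOn hinj, Finset.card_range]
  refine le_antisymm (by simpa using hcol.chromaticNumber_le) ?_
  have := hclique.card_le_chromaticNumber
  rwa [hcard] at this
end

section
/- For integers n ≥ 2 and b ≥ 1, the circulant graph G_{nb,b} satisfies box(G_{nb,b}) ≤ χ(G_{nb,b}) = n. -/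
open SimpleGraph Set

section Aux

variable {n b : ℕ}

lemma circG_adj (hn : 2 ≤ n) (hb : 1 ≤ b) [NeZero (n * b)] (u v : ZMod (n * b)) :
    (circG (n * b) b).Adj u v ↔ u ≠ v ∧ b ≤ (v - u).val ∧ (v - u).val ≤ n * b - b := by
  have h2b : 2 * b ≤ n * b := Nat.mul_le_mul_right b hn
  rw [circG, SimpleGraph.fromRel_adj]
  constructor
  · rintro ⟨hne, h | h⟩
    · obtain ⟨c, hc1, hc2, hc3⟩ := h
      have hclt : c < n * b := by omega
      have hval : (u - v).val = c := by
        rw [hc3, add_sub_cancel_left]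
        exact ZMod.val_cast_of_lt hclt
      have hne' : u - v ≠ 0 := sub_ne_zero.mpr hne
      have hnv : (v - u).val = n * b - (u - v).val := by
        rw [show v - u = -(u - v) by ring, ZMod.neg_val, if_neg hne']
      refine ⟨hne, by omega, by omega⟩
    · obtain ⟨c, hc1, hc2, hc3⟩ := h
      have hclt : c < n * b := by omega
      have hval : (v - u).val = c := by
        rw [hc3, add_sub_cancel_left]
        exact ZMod.val_cast_of_lt hclt
      exact ⟨hne, by omega, by omega⟩
  · rintro ⟨hne, h1, h2⟩
    exact ⟨hne, Or.inr ⟨(v - u).val, h1, h2, by rw [ZMod.natCast_zmod_val]; ring⟩⟩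

/-- relative position of `v` with respect to block `i`. -/
def relpos (n b : ℕ) (i : Fin n) (v : ZMod (n * b)) : ℕ :=
  (v - ((i.val * b : ℕ) : ZMod (n * b))).val

noncomputable def myLo (n b : ℕ) (i : Fin n) (v : ZMod (n * b)) : ℝ :=
  if relpos n b i v < b then -(relpos n b i v : ℝ)
  else if relpos n b i v + 2 ≤ 2 * b then (b : ℝ) - (relpos n b i v : ℝ)
  else -(b : ℝ)

noncomputable def myHi (n b : ℕ) (i : Fin n) (v : ZMod (n * b)) : ℝ :=
  if relpos n b i v < b then -(relpos n b i v : ℝ) else (b : ℝ)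

lemma myLo_left {i : Fin n} {v} (h : relpos n b i v < b) :
    myLo n b i v = -(relpos n b i v : ℝ) := by rw [myLo, if_pos h]

lemma myHi_left {i : Fin n} {v} (h : relpos n b i v < b) :
    myHi n b i v = -(relpos n b i v : ℝ) := by rw [myHi, if_pos h]

lemma myLo_mid {i : Fin n} {v} (h : ¬ relpos n b i v < b) (h2 : relpos n b i v + 2 ≤ 2 * b) :
    myLo n b i v = (b : ℝ) - (relpos n b i v : ℝ) := by rw [myLo, if_neg h, if_pos h2]

lemma myLo_out {i : Fin n} {v} (h : ¬ relpos n b i v < b) (h2 : ¬ relpos n b i v + 2 ≤ 2 * b) :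
    myLo n b i v = -(b : ℝ) := by rw [myLo, if_neg h, if_neg h2]

lemma myHi_right {i : Fin n} {v} (h : ¬ relpos n b i v < b) :
    myHi n b i v = (b : ℝ) := by rw [myHi, if_neg h]

lemma myLo_nonpos (i : Fin n) (v : ZMod (n * b)) : myLo n b i v ≤ 0 := by
  rw [myLo]
  split_ifs with h1 h2
  · simp
  · have h1' : (b : ℝ) ≤ (relpos n b i v : ℝ) := by exact_mod_cast Nat.le_of_not_lt h1
    linarith
  · simp

lemma myLo_le_myHi (i : Fin n) (v : ZMod (n * b)) : myLo n b i v ≤ myHi n b i v := by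
  by_cases h : relpos n b i v < b
  · rw [myLo_left h, myHi_left h]
  · rw [myHi_right h]
    exact le_trans (myLo_nonpos i v) (Nat.cast_nonneg b)

lemma icc_meet_iff {a1 b1 a2 b2 : ℝ} (h1 : a1 ≤ b1) (h2 : a2 ≤ b2) :
    ((Icc a1 b1) ∩ (Icc a2 b2)).Nonempty ↔ a1 ≤ b2 ∧ a2 ≤ b1 := by
  rw [Icc_inter_Icc, nonempty_Icc]
  simp only [max_le_iff, le_min_iff]
  tauto

lemma relpos_inj [NeZero (n * b)] {i : Fin n} {u v : ZMod (n * b)}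
    (h : relpos n b i u = relpos n b i v) : u = v := by
  have h2 : u - ((i.val * b : ℕ) : ZMod (n * b)) = v - ((i.val * b : ℕ) : ZMod (n * b)) :=
    ZMod.val_injective _ h
  exact sub_left_injective h2

lemma relpos_diff [NeZero (n * b)] {i : Fin n} {u v : ZMod (n * b)}
    (h : relpos n b i u ≤ relpos n b i v) :
    (v - u).val = relpos n b i v - relpos n b i u := by
  have hu : ((relpos n b i u : ℕ) : ZMod (n * b)) = u - ((i.val * b : ℕ) : ZMod (n * b)) :=
    ZMod.natCast_zmod_val _
  have hv : ((relpos n b i v : ℕ) : ZMod (n * b)) = v - ((i.val * b : ℕ) : ZMod (n * b)) :=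
    ZMod.natCast_zmod_val _
  have key : v - u = ((relpos n b i v - relpos n b i u : ℕ) : ZMod (n * b)) := by
    rw [Nat.cast_sub h, hv, hu]; ring
  rw [key]
  exact ZMod.val_cast_of_lt (lt_of_le_of_lt (Nat.sub_le _ _) (ZMod.val_lt _))

lemma all_meet (hn : 2 ≤ n) (hb : 1 ≤ b) [NeZero (n * b)] {u v : ZMod (n * b)}
    (hadj : (circG (n * b) b).Adj u v) (i : Fin n) :
    ((Icc (myLo n b i u) (myHi n b i u)) ∩ (Icc (myLo n b i v) (myHi n b i v))).Nonempty := by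
  have hne : u ≠ v := hadj.ne
  obtain ⟨-, hd1, hd2⟩ := (circG_adj hn hb u v).mp hadj
  obtain ⟨-, he1, he2⟩ := (circG_adj hn hb v u).mp hadj.symm
  have hrs : relpos n b i u ≠ relpos n b i v := fun h => hne (relpos_inj h)
  have key1 : relpos n b i u ≤ relpos n b i v → b ≤ relpos n b i v - relpos n b i u := by
    intro hle
    have := relpos_diff (i := i) hle
    omega
  have key2 : relpos n b i v ≤ relpos n b i u → b ≤ relpos n b i u - relpos n b i v := by
    intro hle
    have := relpos_diff (i := i) hle
    omega
  rw [icc_meet_iff (myLo_le_myHi i u) (myLo_le_myHi i v)]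
  by_cases hr : relpos n b i u < b <;> by_cases hs : relpos n b i v < b
  · exfalso
    rcases lt_trichotomy (relpos n b i u) (relpos n b i v) with h | h | h
    · have := key1 h.le; omega
    · exact hrs h
    · have := key2 h.le; omega
  · -- u left, v right/out
    have hbig : relpos n b i u + b ≤ relpos n b i v := by
      have := key1 (by omega)
      omega
    rw [myLo_left hr, myHi_left hr, myHi_right hs]
    have hc1 : (relpos n b i u : ℝ) < b := by exact_mod_cast hr
    have hc0 : (0 : ℝ) ≤ (relpos n b i u : ℝ) := Nat.cast_nonneg _
    by_cases hmid : relpos n b i v + 2 ≤ 2 * b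
    · rw [myLo_mid hs hmid]
      have hc2 : (relpos n b i u : ℝ) + b ≤ (relpos n b i v : ℝ) := by exact_mod_cast hbig
      constructor <;> linarith
    · rw [myLo_out hs hmid]
      constructor <;> linarith
  · -- v left, u right/out
    have hbig : relpos n b i v + b ≤ relpos n b i u := by
      have := key2 (by omega)
      omega
    rw [myLo_left hs, myHi_left hs, myHi_right hr]
    have hc1 : (relpos n b i v : ℝ) < b := by exact_mod_cast hs
    have hc0 : (0 : ℝ) ≤ (relpos n b i v : ℝ) := Nat.cast_nonneg _
    by_cases hmid : relpos n b i u + 2 ≤ 2 * b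
    · rw [myLo_mid hr hmid]
      have hc2 : (relpos n b i v : ℝ) + b ≤ (relpos n b i u : ℝ) := by exact_mod_cast hbig
      constructor <;> linarith
    · rw [myLo_out hr hmid]
      constructor <;> linarith
  · rw [myHi_right hr, myHi_right hs]
    exact ⟨le_trans (myLo_nonpos i u) (Nat.cast_nonneg b),
      le_trans (myLo_nonpos i v) (Nat.cast_nonneg b)⟩

lemma no_meet (hn : 2 ≤ n) (hb : 1 ≤ b) [NeZero (n * b)] {u v : ZMod (n * b)}
    (hne : u ≠ v) (hd : (v - u).val < b) :
    ∃ i : Fin n, ¬ ((Icc (myLo n b i u) (myHi n b i u)) ∩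
      (Icc (myLo n b i v) (myHi n b i v))).Nonempty := by
  have h2b : 2 * b ≤ n * b := Nat.mul_le_mul_right b hn
  have hd1 : 1 ≤ (v - u).val := by
    rcases Nat.eq_zero_or_pos (v - u).val with h0 | h0
    · exact absurd (sub_eq_zero.mp ((ZMod.val_eq_zero _).mp h0)).symm hne
    · exact h0
  have hun : u.val < n * b := ZMod.val_lt u
  have hi0n : u.val / b < n := Nat.div_lt_of_lt_mul (lt_of_lt_of_le hun (le_of_eq (mul_comm n b)))
  refine ⟨⟨u.val / b, hi0n⟩, ?_⟩
  set i : Fin n := ⟨u.val / b, hi0n⟩ with hi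
  have hmul : (u.val / b) * b ≤ u.val := Nat.div_mul_le_self _ _
  have hmod := Nat.div_add_mod u.val b
  have hmlt : u.val % b < b := Nat.mod_lt _ hb
  have hcast : ((i.val * b : ℕ) : ZMod (n * b)).val = i.val * b :=
    ZMod.val_cast_of_lt (by
      have : (u.val / b + 1) * b ≤ n * b := Nat.mul_le_mul_right b hi0n
      simp only [hi]
      omega)
  have hrval : relpos n b i u = u.val - (u.val / b) * b := by
    rw [relpos, ZMod.val_sub (by rw [hcast]; exact hmul), hcast]
  have hcomm : b * (u.val / b) = (u.val / b) * b := mul_comm _ _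
  have hrb : relpos n b i u < b := by omega
  have hsval : relpos n b i v = relpos n b i u + (v - u).val := by
    have h1 : ((relpos n b i u : ℕ) : ZMod (n * b)) = u - ((i.val * b : ℕ) : ZMod (n * b)) :=
      ZMod.natCast_zmod_val _
    have h2 : (((v - u).val : ℕ) : ZMod (n * b)) = v - u := ZMod.natCast_zmod_val _
    have key : v - ((i.val * b : ℕ) : ZMod (n * b)) =
        ((relpos n b i u + (v - u).val : ℕ) : ZMod (n * b)) := by
      rw [Nat.cast_add, h1, h2]; ring
    rw [relpos, key]
    exact ZMod.val_cast_of_lt (by omega)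
  rw [icc_meet_iff (myLo_le_myHi i u) (myLo_le_myHi i v)]
  rintro ⟨m1, m2⟩
  by_cases hs : relpos n b i v < b
  · rw [myLo_left hrb, myHi_left hs] at m1
    have : (relpos n b i v : ℝ) ≤ (relpos n b i u : ℝ) := by linarith
    have : relpos n b i v ≤ relpos n b i u := by exact_mod_cast this
    omega
  · have hmid : relpos n b i v + 2 ≤ 2 * b := by omega
    rw [myLo_mid hs hmid, myHi_left hrb] at m2
    have : (relpos n b i u : ℝ) + b ≤ (relpos n b i v : ℝ) := by linarith
    have : relpos n b i u + b ≤ relpos n b i v := by exact_mod_cast this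
    omega


lemma hasBoxRep (hn : 2 ≤ n) (hb : 1 ≤ b) [NeZero (n * b)] :
    HasBoxRep (circG (n * b) b) n := by
  refine ⟨fun v i => myLo n b i v, fun v i => myHi n b i v, fun u v hne => ?_⟩
  constructor
  · intro hadj i
    exact all_meet hn hb hadj i
  · intro hmeet
    by_contra hnadj
    have h2b : 2 * b ≤ n * b := Nat.mul_le_mul_right b hn
    have hnotboth : ¬ (b ≤ (v - u).val ∧ (v - u).val ≤ n * b - b) := by
      intro hcon
      exact hnadj ((circG_adj hn hb u v).mpr ⟨hne, hcon.1, hcon.2⟩)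
    rcases Nat.lt_or_ge (v - u).val b with hcase | hcase
    · obtain ⟨i, hi⟩ := no_meet hn hb hne hcase
      exact hi (hmeet i)
    · have hne' : v - u ≠ 0 := sub_ne_zero.mpr hne.symm
      have hnv : (u - v).val = n * b - (v - u).val := by
        rw [show u - v = -(v - u) by ring, ZMod.neg_val, if_neg hne']
      have hvu : (v - u).val < n * b := ZMod.val_lt _
      have hcase2 : (u - v).val < b := by omega
      obtain ⟨i, hi⟩ := no_meet hn hb hne.symm hcase2
      rw [Set.inter_comm] at hi
      exact hi (hmeet i)

lemma colorable (hn : 2 ≤ n) (hb : 1 ≤ b) [NeZero (n * b)] :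
    (circG (n * b) b).Colorable n := by
  refine ⟨SimpleGraph.Coloring.mk
    (fun v => ⟨v.val / b, Nat.div_lt_of_lt_mul
      (lt_of_lt_of_le (ZMod.val_lt v) (le_of_eq (mul_comm n b)))⟩) ?_⟩
  intro u v hadj heq
  have heq' : u.val / b = v.val / b := congrArg Fin.val heq
  obtain ⟨hne, hd1, hd2⟩ := (circG_adj hn hb u v).mp hadj
  obtain ⟨-, he1, he2⟩ := (circG_adj hn hb v u).mp hadj.symm
  have h1 := Nat.div_add_mod u.val b
  have h2 := Nat.div_add_mod v.val b
  rw [heq'] at h1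
  have h3 : u.val % b < b := Nat.mod_lt _ hb
  have h4 : v.val % b < b := Nat.mod_lt _ hb
  rcases le_total u.val v.val with hle | hle
  · have : (v - u).val = v.val - u.val := ZMod.val_sub hle
    omega
  · have : (u - v).val = u.val - v.val := ZMod.val_sub hle
    omega

lemma adj_blocks (hn : 2 ≤ n) (hb : 1 ≤ b) [NeZero (n * b)] {k l : Fin n}
    (hkl : k.val < l.val) :
    (circG (n * b) b).Adj ((k.val * b : ℕ) : ZMod (n * b)) ((l.val * b : ℕ) : ZMod (n * b)) := by
  have hkb : k.val * b + b ≤ n * b := by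
    have : (k.val + 1) * b ≤ n * b := Nat.mul_le_mul_right b k.isLt
    rw [add_one_mul] at this; omega
  have hlb : l.val * b + b ≤ n * b := by
    have : (l.val + 1) * b ≤ n * b := Nat.mul_le_mul_right b l.isLt
    rw [add_one_mul] at this; omega
  have hklb : k.val * b + b ≤ l.val * b := by
    have : (k.val + 1) * b ≤ l.val * b := Nat.mul_le_mul_right b hkl
    rw [add_one_mul] at this; omega
  have hck : ((k.val * b : ℕ) : ZMod (n * b)).val = k.val * b := ZMod.val_cast_of_lt (by omega)
  have hcl : ((l.val * b : ℕ) : ZMod (n * b)).val = l.val * b := ZMod.val_cast_of_lt (by omega)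
  rw [circG_adj hn hb]
  have hdiff : (((l.val * b : ℕ) : ZMod (n * b)) - ((k.val * b : ℕ) : ZMod (n * b))).val
      = l.val * b - k.val * b := by
    rw [ZMod.val_sub (by omega), hck, hcl]
  refine ⟨?_, by omega, by omega⟩
  intro hcon
  have := congrArg ZMod.val hcon
  omega

lemma chrom_eq (hn : 2 ≤ n) (hb : 1 ≤ b) [NeZero (n * b)] :
    (circG (n * b) b).chromaticNumber = (n : ℕ∞) := by
  refine le_antisymm ((colorable hn hb).chromaticNumber_le) ?_
  have hinj : Function.Injective (fun k : Fin n => ((k.val * b : ℕ) : ZMod (n * b))) := by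
    intro k l hklz
    have hkb : k.val * b + b ≤ n * b := by
      have : (k.val + 1) * b ≤ n * b := Nat.mul_le_mul_right b k.isLt
      rw [add_one_mul] at this; omega
    have hlb : l.val * b + b ≤ n * b := by
      have : (l.val + 1) * b ≤ n * b := Nat.mul_le_mul_right b l.isLt
      rw [add_one_mul] at this; omega
    have hck : ((k.val * b : ℕ) : ZMod (n * b)).val = k.val * b := ZMod.val_cast_of_lt (by omega)
    have hcl : ((l.val * b : ℕ) : ZMod (n * b)).val = l.val * b := ZMod.val_cast_of_lt (by omega)
    have := congrArg ZMod.val hklz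
    rw [hck, hcl] at this
    have : k.val = l.val := Nat.eq_of_mul_eq_mul_right (by omega) this
    exact Fin.ext this
  set s : Finset (ZMod (n * b)) :=
    Finset.image (fun k : Fin n => ((k.val * b : ℕ) : ZMod (n * b))) Finset.univ with hsdef
  have hclique : (circG (n * b) b).IsClique (s : Set (ZMod (n * b))) := by
    intro x hx y hy hxy
    simp only [hsdef, Finset.coe_image, Finset.coe_univ, Set.image_univ, Set.mem_range] at hx hy
    obtain ⟨k, rfl⟩ := hx
    obtain ⟨l, rfl⟩ := hy
    rcases lt_trichotomy k.val l.val with h | h | h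
    · exact adj_blocks hn hb h
    · exact absurd (congrArg (fun k : Fin n => ((k.val * b : ℕ) : ZMod (n * b))) (Fin.ext h)) hxy
    · exact (adj_blocks hn hb h).symm
  have hcard : s.card = n := by
    rw [hsdef, Finset.card_image_of_injective _ hinj, Finset.card_univ, Fintype.card_fin]
  have := hclique.card_le_chromaticNumber
  rwa [hcard] at this

end Aux

theorem stmt12 (n b : ℕ) (hn : 2 ≤ n) (hb : 1 ≤ b) :
    boxicity (circG (n * b) b) ≤ n ∧
      (circG (n * b) b).chromaticNumber = (n : ℕ∞) := by
  haveI : NeZero (n * b) := ⟨Nat.mul_ne_zero (by omega) (by omega)⟩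
  exact ⟨Nat.sInf_le (hasBoxRep hn hb), chrom_eq hn hb⟩
end

section
/- For integers a ≥ 3b and b ≥ 3, the circulant graph G_{a,b} contains an asteroidal triple; in particular, the vertices 1, ⌈b/2⌉, and b form an asteroidal triple. -/
open SimpleGraph Set

lemma aux_cast_ne {a x y : ℕ} (hx : x < a) (hy : y < a) (h : x ≠ y) :
    (x : ZMod a) ≠ (y : ZMod a) := by
  intro he
  exact h (by rw [← ZMod.val_cast_of_lt hx, ← ZMod.val_cast_of_lt hy, he])

lemma aux_val_sub_le {a x y : ℕ} (hy : y ≤ x) (hx : x < a) :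
    ((x : ZMod a) - (y : ZMod a)).val = x - y := by
  have h : ((x - y : ℕ) : ZMod a) = (x : ZMod a) - (y : ZMod a) := by
    push_cast [Nat.cast_sub hy]; ring
  rw [← h, ZMod.val_cast_of_lt (by omega)]

lemma aux_val_sub_lt {a x y : ℕ} (hxy : x < y) (hy : y < a) :
    ((x : ZMod a) - (y : ZMod a)).val = a + x - y := by
  have h : ((a + x - y : ℕ) : ZMod a) = (x : ZMod a) - (y : ZMod a) := by
    push_cast [Nat.cast_sub (by omega : y ≤ a + x)]
    rw [ZMod.natCast_self]; ring
  rw [← h, ZMod.val_cast_of_lt (by omega)]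

lemma aux_adj_iff {a b : ℕ} [NeZero a] (hb : 1 ≤ b) (hba : b ≤ a) (x y : ZMod a) :
    (circG a b).Adj x y ↔ x ≠ y ∧ b ≤ (x - y).val ∧ (x - y).val ≤ a - b := by
  have ha : 0 < a := Nat.pos_of_ne_zero (NeZero.ne a)
  rw [circG, SimpleGraph.fromRel_adj]
  constructor
  · rintro ⟨hne, ⟨c, hbc, hca, hxy⟩ | ⟨c, hbc, hca, hyx⟩⟩
    · have hc : c < a := by omega
      have : x - y = (c : ZMod a) := by rw [hxy]; ring
      rw [this, ZMod.val_cast_of_lt hc]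
      exact ⟨hne, hbc, hca⟩
    · have hc : c < a := by omega
      have h1 : y - x = (c : ZMod a) := by rw [hyx]; ring
      have h2 : x - y = -(y - x) := by ring
      have h3 : y - x ≠ 0 := sub_ne_zero.mpr (Ne.symm hne)
      rw [h2, ZMod.neg_val, if_neg h3, h1, ZMod.val_cast_of_lt hc]
      exact ⟨hne, by omega, by omega⟩
  · rintro ⟨hne, h1, h2⟩
    refine ⟨hne, Or.inl ⟨(x - y).val, h1, h2, ?_⟩⟩
    rw [ZMod.natCast_val, ZMod.cast_id]
    ring

theorem stmt13 (a b : ℕ) (hab : 3 * b ≤ a) (hb : 3 ≤ b) :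
    IsAsteroidalTriple (circG a b) (1 : ZMod a)
      (((b + 1) / 2 : ℕ) : ZMod a) ((b : ℕ) : ZMod a) := by
  have ha9 : 9 ≤ a := by omega
  haveI : NeZero a := ⟨by omega⟩
  set m : ℕ := (b + 1) / 2 with hm
  have hm2 : 2 ≤ m := by omega
  have hmb : m + 1 ≤ b := by omega
  have h1b : (1 : ℕ) ≤ b := by omega
  have hba : b ≤ a := by omega
  have adj : ∀ x y : ZMod a, (circG a b).Adj x y ↔
      x ≠ y ∧ b ≤ (x - y).val ∧ (x - y).val ≤ a - b := fun x y => aux_adj_iff h1b hba x y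
  rw [show (1 : ZMod a) = ((1 : ℕ) : ZMod a) by norm_cast]
  -- adjacency facts for path edges
  have e1 : (circG a b).Adj ((1 : ℕ) : ZMod a) ((m + b : ℕ) : ZMod a) := by
    rw [adj]
    refine ⟨aux_cast_ne (by omega) (by omega) (by omega), ?_⟩
    rw [aux_val_sub_lt (by omega) (by omega)]; omega
  have e2 : (circG a b).Adj ((m + b : ℕ) : ZMod a) ((m : ℕ) : ZMod a) := by
    rw [adj]
    refine ⟨aux_cast_ne (by omega) (by omega) (by omega), ?_⟩
    rw [aux_val_sub_le (by omega) (by omega)]; omega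
  have e3 : (circG a b).Adj ((m : ℕ) : ZMod a) ((a - b + m : ℕ) : ZMod a) := by
    rw [adj]
    refine ⟨aux_cast_ne (by omega) (by omega) (by omega), ?_⟩
    rw [aux_val_sub_lt (by omega) (by omega)]; omega
  have e4 : (circG a b).Adj ((a - b + m : ℕ) : ZMod a) ((b : ℕ) : ZMod a) := by
    rw [adj]
    refine ⟨aux_cast_ne (by omega) (by omega) (by omega), ?_⟩
    rw [aux_val_sub_le (by omega) (by omega)]; omega
  have e5 : (circG a b).Adj ((b : ℕ) : ZMod a) ((0 : ℕ) : ZMod a) := by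
    rw [adj]
    refine ⟨aux_cast_ne (by omega) (by omega) (by omega), ?_⟩
    rw [aux_val_sub_le (by omega) (by omega)]; omega
  have e6 : (circG a b).Adj ((0 : ℕ) : ZMod a) ((m + b - 1 : ℕ) : ZMod a) := by
    rw [adj]
    refine ⟨aux_cast_ne (by omega) (by omega) (by omega), ?_⟩
    rw [aux_val_sub_lt (by omega) (by omega)]; omega
  have e7 : (circG a b).Adj ((m + b - 1 : ℕ) : ZMod a) ((1 : ℕ) : ZMod a) := by
    rw [adj]
    refine ⟨aux_cast_ne (by omega) (by omega) (by omega), ?_⟩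
    rw [aux_val_sub_le (by omega) (by omega)]; omega
  refine ⟨aux_cast_ne (by omega) (by omega) (by omega),
    aux_cast_ne (by omega) (by omega) (by omega),
    aux_cast_ne (by omega) (by omega) (by omega),
    SimpleGraph.Walk.cons e1 (SimpleGraph.Walk.cons e2 SimpleGraph.Walk.nil),
    SimpleGraph.Walk.cons e3 (SimpleGraph.Walk.cons e4 SimpleGraph.Walk.nil),
    SimpleGraph.Walk.cons e5 (SimpleGraph.Walk.cons e6
      (SimpleGraph.Walk.cons e7 SimpleGraph.Walk.nil)), ?_, ?_, ?_, ?_, ?_, ?_⟩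
  · rw [SimpleGraph.Walk.isPath_def]
    simp only [SimpleGraph.Walk.support_cons, SimpleGraph.Walk.support_nil,
      List.nodup_cons, List.mem_cons, List.mem_singleton, List.not_mem_nil,
      List.nodup_nil, not_or, or_false, not_false_eq_true, and_true]
    exact ⟨⟨aux_cast_ne (by omega) (by omega) (by omega),
      aux_cast_ne (by omega) (by omega) (by omega)⟩,
      aux_cast_ne (by omega) (by omega) (by omega)⟩
  · rw [SimpleGraph.Walk.isPath_def]
    simp only [SimpleGraph.Walk.support_cons, SimpleGraph.Walk.support_nil,
      List.nodup_cons, List.mem_cons, List.mem_singleton, List.not_mem_nil,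
      List.nodup_nil, not_or, or_false, not_false_eq_true, and_true]
    exact ⟨⟨aux_cast_ne (by omega) (by omega) (by omega),
      aux_cast_ne (by omega) (by omega) (by omega)⟩,
      aux_cast_ne (by omega) (by omega) (by omega)⟩
  · rw [SimpleGraph.Walk.isPath_def]
    simp only [SimpleGraph.Walk.support_cons, SimpleGraph.Walk.support_nil,
      List.nodup_cons, List.mem_cons, List.mem_singleton, List.not_mem_nil,
      List.nodup_nil, not_or, or_false, not_false_eq_true, and_true]
    exact ⟨⟨aux_cast_ne (by omega) (by omega) (by omega),
      aux_cast_ne (by omega) (by omega) (by omega),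
      aux_cast_ne (by omega) (by omega) (by omega)⟩,
      ⟨aux_cast_ne (by omega) (by omega) (by omega),
      aux_cast_ne (by omega) (by omega) (by omega)⟩,
      aux_cast_ne (by omega) (by omega) (by omega)⟩
  · -- p avoids N(b)
    intro x hx
    simp only [SimpleGraph.Walk.support_cons, SimpleGraph.Walk.support_nil,
      List.mem_cons, List.mem_singleton, List.not_mem_nil, or_false] at hx
    rcases hx with rfl | rfl | rfl
    · rw [adj]; rintro ⟨-, h1, h2⟩
      rw [aux_val_sub_le (by omega) (by omega)] at h1 h2; omega
    · rw [adj]; rintro ⟨-, h1, h2⟩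
      rw [aux_val_sub_lt (by omega) (by omega)] at h1 h2; omega
    · rw [adj]; rintro ⟨-, h1, h2⟩
      rw [aux_val_sub_le (by omega) (by omega)] at h1 h2; omega
  · -- q avoids N(1)
    intro x hx
    simp only [SimpleGraph.Walk.support_cons, SimpleGraph.Walk.support_nil,
      List.mem_cons, List.mem_singleton, List.not_mem_nil, or_false] at hx
    rcases hx with rfl | rfl | rfl
    · rw [adj]; rintro ⟨-, h1, h2⟩
      rw [aux_val_sub_lt (by omega) (by omega)] at h1 h2; omega
    · rw [adj]; rintro ⟨-, h1, h2⟩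
      rw [aux_val_sub_lt (by omega) (by omega)] at h1 h2; omega
    · rw [adj]; rintro ⟨-, h1, h2⟩
      rw [aux_val_sub_lt (by omega) (by omega)] at h1 h2; omega
  · -- r avoids N(m)
    intro x hx
    simp only [SimpleGraph.Walk.support_cons, SimpleGraph.Walk.support_nil,
      List.mem_cons, List.mem_singleton, List.not_mem_nil, or_false] at hx
    rcases hx with rfl | rfl | rfl | rfl
    · rw [adj]; rintro ⟨-, h1, h2⟩
      rw [aux_val_sub_lt (by omega) (by omega)] at h1 h2; omega
    · rw [adj]; rintro ⟨-, h1, h2⟩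
      rw [aux_val_sub_le (by omega) (by omega)] at h1 h2; omega
    · rw [adj]; rintro ⟨-, h1, h2⟩
      rw [aux_val_sub_lt (by omega) (by omega)] at h1 h2; omega
    · rw [adj]; rintro ⟨-, h1, h2⟩
      rw [aux_val_sub_le (by omega) (by omega)] at h1 h2; omega
end

section
/- For integers n ≥ 2, b ≥ 2 and 1 ≤ r < b with n ≥ b - r - 1, the circulant graph G_{nb+r,b} satisfies box(G_{nb+r,b}) ≤ χ(G_{nb+r,b}). -/
open SimpleGraph Set

section
variable (n b A : ℕ) [NeZero A]

def sigmaF (i : Fin (n+1)) : ℕ := min (i.1 * b) (A - b)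
def posF (u : ZMod A) (i : Fin (n+1)) : ℕ := (u - ((sigmaF n b A i : ℕ) : ZMod A)).val
noncomputable def loF (u : ZMod A) (i : Fin (n+1)) : ℝ :=
  if posF n b A u i < b then (posF n b A u i : ℝ)
  else if posF n b A u i ≤ 2*b - 2 then -(A:ℝ) else -(A:ℝ) - 1
noncomputable def hiF (u : ZMod A) (i : Fin (n+1)) : ℝ :=
  if posF n b A u i < b then (posF n b A u i : ℝ)
  else if posF n b A u i ≤ 2*b - 2 then (posF n b A u i : ℝ) - b + 2⁻¹ else (A:ℝ) + 1

variable {A} in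
lemma zmod_sub_val {p q : ℕ} (hp : p < A) (hq : q < A) :
    ((p : ZMod A) - (q : ZMod A)).val = if q ≤ p then p - q else A - (q - p) := by
  rcases le_or_gt q p with h | h
  · rw [if_pos h, ← Nat.cast_sub h, ZMod.val_cast_of_lt (by omega)]
  · rw [if_neg (not_le.mpr h)]
    have e : (p : ZMod A) - (q : ZMod A) = -(((q - p : ℕ) : ZMod A)) := by
      rw [Nat.cast_sub h.le]; ring
    have hne : ((q - p : ℕ) : ZMod A) ≠ 0 := by
      intro h0
      have := ZMod.val_cast_of_lt (n := A) (a := q - p) (by omega)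
      rw [h0, ZMod.val_zero] at this; omega
    rw [e, ZMod.neg_val, if_neg hne, ZMod.val_cast_of_lt (by omega)]

lemma posF_lt (u : ZMod A) (i : Fin (n+1)) : posF n b A u i < A := ZMod.val_lt _

lemma posF_cast (u : ZMod A) (i : Fin (n+1)) :
    ((posF n b A u i : ℕ) : ZMod A) = u - ((sigmaF n b A i : ℕ) : ZMod A) :=
  ZMod.natCast_rightInverse _

lemma posF_add (v : ZMod A) (δ : ℕ) (i : Fin (n+1)) (h : posF n b A v i + δ < A) :
    posF n b A (v + (δ : ZMod A)) i = posF n b A v i + δ := by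
  have e : v + (δ : ZMod A) - ((sigmaF n b A i : ℕ) : ZMod A)
      = ((posF n b A v i + δ : ℕ) : ZMod A) := by
    push_cast
    rw [posF_cast n b A v i]
    ring
  rw [posF, e, ZMod.val_cast_of_lt h]

lemma posF_sub (u v : ZMod A) (i : Fin (n+1)) :
    (u - v).val = if posF n b A v i ≤ posF n b A u i
      then posF n b A u i - posF n b A v i
      else A - (posF n b A v i - posF n b A u i) := by
  have e : u - v = ((posF n b A u i : ℕ) : ZMod A) - ((posF n b A v i : ℕ) : ZMod A) := by
    rw [posF_cast, posF_cast]; ring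
  rw [e]
  exact zmod_sub_val (posF_lt n b A u i) (posF_lt n b A v i)

lemma posF_val (hb : 1 ≤ b) (hA : b ≤ A) (u : ZMod A) (i : Fin (n+1)) :
    posF n b A u i = if sigmaF n b A i ≤ u.val then u.val - sigmaF n b A i
      else A - (sigmaF n b A i - u.val) := by
  have hxc : ((u.val : ℕ) : ZMod A) = u := ZMod.natCast_rightInverse _
  have hσ : sigmaF n b A i < A := lt_of_le_of_lt (min_le_right _ _) (by omega)
  rw [posF]
  conv_lhs => rw [← hxc]
  exact zmod_sub_val (ZMod.val_lt u) hσ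

lemma coverage (hb : 1 ≤ b) (hA1 : 2*b+1 ≤ A) (hA2 : A ≤ n*b + b)
    (x : ZMod A) : ∃ i : Fin (n+1), posF n b A x i < b := by
  have hx : x.val < A := ZMod.val_lt x
  by_cases h : A - b ≤ x.val
  · refine ⟨⟨n, by omega⟩, ?_⟩
    have hs : sigmaF n b A ⟨n, by omega⟩ = A - b := by
      show min (n * b) (A - b) = A - b
      exact min_eq_right (by omega)
    rw [posF_val n b A (by omega) (by omega), hs, if_pos h]
    omega
  · have hdiv : x.val / b < n + 1 := by
      have : x.val / b * b ≤ x.val := Nat.div_mul_le_self _ _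
      by_contra hc
      push_neg at hc
      have h2 : (n+1) * b ≤ x.val / b * b := Nat.mul_le_mul_right b hc
      have h3 : (n+1) * b = n * b + b := by ring
      omega
    refine ⟨⟨x.val / b, hdiv⟩, ?_⟩
    have hmul : x.val / b * b ≤ x.val := Nat.div_mul_le_self _ _
    have hs : sigmaF n b A ⟨x.val / b, hdiv⟩ = x.val / b * b := by
      show min (x.val / b * b) (A - b) = x.val / b * b
      exact min_eq_left (by omega)
    rw [posF_val n b A (by omega) (by omega), hs, if_pos hmul]
    have hdm : x.val / b * b + x.val % b = x.val := by
      rw [mul_comm]; exact Nat.div_add_mod _ _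
    have hm : x.val % b < b := Nat.mod_lt _ (by omega)
    omega

lemma kill_lemma (hb : 2 ≤ b) (hA1 : 2*b+1 ≤ A)
    (v : ZMod A) (δ : ℕ) (hδ1 : 1 ≤ δ) (hδ2 : δ < b) (i : Fin (n+1))
    (hq : posF n b A v i < b) :
    ¬ (Set.Icc (loF n b A (v + (δ:ZMod A)) i) (hiF n b A (v + (δ:ZMod A)) i) ∩
       Set.Icc (loF n b A v i) (hiF n b A v i)).Nonempty := by
  have hp : posF n b A (v + (δ:ZMod A)) i = posF n b A v i + δ :=
    posF_add n b A v δ i (by omega)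
  set u := v + (δ:ZMod A) with hu
  set q := posF n b A v i with hqd
  set p := posF n b A u i with hpd
  rintro ⟨x, hx1, hx2⟩
  rw [Set.mem_Icc] at hx1 hx2
  have hlv : loF n b A v i = (q:ℝ) := by rw [loF, if_pos hq]
  have hhv : hiF n b A v i = (q:ℝ) := by rw [hiF, if_pos hq]
  rw [hlv, hhv] at hx2
  by_cases hpb : p < b
  · have hlu : loF n b A u i = (p:ℝ) := by rw [loF, if_pos hpb]
    have hhu : hiF n b A u i = (p:ℝ) := by rw [hiF, if_pos hpb]
    rw [hlu, hhu] at hx1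
    have he : (p:ℝ) = (q:ℝ) := le_antisymm (by linarith) (by linarith)
    have : p = q := by exact_mod_cast he
    omega
  · have hp2 : p ≤ 2*b - 2 := by omega
    have hlu : loF n b A u i = -(A:ℝ) := by rw [loF, if_neg hpb, if_pos hp2]
    have hhu : hiF n b A u i = (p:ℝ) - b + 2⁻¹ := by rw [hiF, if_neg hpb, if_pos hp2]
    rw [hlu, hhu] at hx1
    have hle : q + b ≤ p := by
      by_contra hcc
      push_neg at hcc
      have h1 : (p:ℝ) + 1 ≤ (q:ℝ) + (b:ℝ) := by exact_mod_cast hcc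
      linarith
    omega


variable {A} in
lemma val_sub_rev' {u v : ZMod A} (h : v ≠ u) :
    (u - v).val = A - (v - u).val := by
  have h0 : v - u ≠ 0 := sub_ne_zero.mpr h
  have e : u - v = -(v - u) := by ring
  rw [e, ZMod.neg_val, if_neg h0]

variable {A b : ℕ} [NeZero A] in
lemma circ_adj (hb : 1 ≤ b) (hA : b ≤ A) {u v : ZMod A} :
    (circG A b).Adj u v ↔ u ≠ v ∧ b ≤ (u - v).val ∧ (u - v).val ≤ A - b := by
  rw [circG, SimpleGraph.fromRel_adj]
  constructor
  · rintro ⟨hne, ⟨c, hc1, hc2, hc3⟩ | ⟨c, hc1, hc2, hc3⟩⟩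
    · refine ⟨hne, ?_⟩
      have e : u - v = (c : ZMod A) := by rw [hc3]; ring
      rw [e, ZMod.val_cast_of_lt (by omega)]
      omega
    · refine ⟨hne, ?_⟩
      have e : v - u = (c : ZMod A) := by rw [hc3]; ring
      have h2 : (v - u).val = c := by rw [e, ZMod.val_cast_of_lt (by omega)]
      have h3 : (u - v).val = A - c := by rw [val_sub_rev' hne.symm, h2]
      omega
  · rintro ⟨hne, h1, h2⟩
    refine ⟨hne, Or.inl ⟨(u - v).val, h1, h2, ?_⟩⟩
    have e : (((u - v).val : ℕ) : ZMod A) = u - v := ZMod.natCast_rightInverse _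
    rw [e]; ring

lemma box_iff (n b A : ℕ) [NeZero A] (hb : 2 ≤ b) (hA1 : 2*b+1 ≤ A) (hA2 : A ≤ n*b + b)
    (u v : ZMod A) (huv : u ≠ v) :
    (circG A b).Adj u v ↔ ∀ i : Fin (n+1),
      (Set.Icc (loF n b A u i) (hiF n b A u i) ∩
       Set.Icc (loF n b A v i) (hiF n b A v i)).Nonempty := by
  have hApos : 0 < A := by omega
  constructor
  · intro hadj i
    rw [circ_adj (by omega) (by omega)] at hadj
    obtain ⟨-, hd1, hd2⟩ := hadj
    have hval := posF_sub n b A u v i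
    set p := posF n b A u i with hpd
    set q := posF n b A v i with hqd
    have hpA : p < A := posF_lt n b A u i
    have hqA : q < A := posF_lt n b A v i
    by_cases hp : p < b <;> by_cases hq : q < b
    · -- both chain: contradicts adjacency
      exfalso
      rcases le_or_gt q p with h | h
      · rw [if_pos h] at hval; omega
      · rw [if_neg (not_le.mpr h)] at hval; omega
    · -- u chain, v upper or out
      have hlu : loF n b A u i = (p:ℝ) := by rw [loF, if_pos hp]
      have hhu : hiF n b A u i = (p:ℝ) := by rw [hiF, if_pos hp]
      by_cases hq2 : q ≤ 2*b - 2
      · have hpbq : p + b ≤ q := by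
          rcases le_or_gt q p with h | h
          · omega
          · rw [if_neg (not_le.mpr h)] at hval; omega
        have hlv : loF n b A v i = -(A:ℝ) := by rw [loF, if_neg hq, if_pos hq2]
        have hhv : hiF n b A v i = (q:ℝ) - b + 2⁻¹ := by rw [hiF, if_neg hq, if_pos hq2]
        refine ⟨(p:ℝ), ?_, ?_⟩ <;> rw [Set.mem_Icc]
        · rw [hlu, hhu]; exact ⟨le_refl _, le_refl _⟩
        · rw [hlv, hhv]
          constructor
          · have : (0:ℝ) ≤ (p:ℝ) := Nat.cast_nonneg _
            have hA' : (0:ℝ) < (A:ℝ) := by exact_mod_cast hApos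
            linarith
          · have : (p:ℝ) + (b:ℝ) ≤ (q:ℝ) := by exact_mod_cast hpbq
            linarith
      · have hlv : loF n b A v i = -(A:ℝ) - 1 := by rw [loF, if_neg hq, if_neg hq2]
        have hhv : hiF n b A v i = (A:ℝ) + 1 := by rw [hiF, if_neg hq, if_neg hq2]
        refine ⟨(p:ℝ), ?_, ?_⟩ <;> rw [Set.mem_Icc]
        · rw [hlu, hhu]; exact ⟨le_refl _, le_refl _⟩
        · rw [hlv, hhv]
          have h0 : (0:ℝ) ≤ (p:ℝ) := Nat.cast_nonneg _
          have hA' : (0:ℝ) < (A:ℝ) := by exact_mod_cast hApos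
          have hpA' : (p:ℝ) < (A:ℝ) := by exact_mod_cast hpA
          constructor <;> linarith
    · -- v chain, u upper or out
      have hlv : loF n b A v i = (q:ℝ) := by rw [loF, if_pos hq]
      have hhv : hiF n b A v i = (q:ℝ) := by rw [hiF, if_pos hq]
      by_cases hp2 : p ≤ 2*b - 2
      · have hqbp : q + b ≤ p := by
          rcases le_or_gt q p with h | h
          · rw [if_pos h] at hval; omega
          · omega
        have hlu : loF n b A u i = -(A:ℝ) := by rw [loF, if_neg hp, if_pos hp2]
        have hhu : hiF n b A u i = (p:ℝ) - b + 2⁻¹ := by rw [hiF, if_neg hp, if_pos hp2]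
        refine ⟨(q:ℝ), ?_, ?_⟩ <;> rw [Set.mem_Icc]
        · rw [hlu, hhu]
          constructor
          · have : (0:ℝ) ≤ (q:ℝ) := Nat.cast_nonneg _
            have hA' : (0:ℝ) < (A:ℝ) := by exact_mod_cast hApos
            linarith
          · have : (q:ℝ) + (b:ℝ) ≤ (p:ℝ) := by exact_mod_cast hqbp
            linarith
        · rw [hlv, hhv]; exact ⟨le_refl _, le_refl _⟩
      · have hlu : loF n b A u i = -(A:ℝ) - 1 := by rw [loF, if_neg hp, if_neg hp2]
        have hhu : hiF n b A u i = (A:ℝ) + 1 := by rw [hiF, if_neg hp, if_neg hp2]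
        refine ⟨(q:ℝ), ?_, ?_⟩ <;> rw [Set.mem_Icc]
        · rw [hlu, hhu]
          have h0 : (0:ℝ) ≤ (q:ℝ) := Nat.cast_nonneg _
          have hA' : (0:ℝ) < (A:ℝ) := by exact_mod_cast hApos
          have hqA' : (q:ℝ) < (A:ℝ) := by exact_mod_cast hqA
          constructor <;> linarith
        · rw [hlv, hhv]; exact ⟨le_refl _, le_refl _⟩
    · -- both non-chain: -(A) is in both
      have hA' : (0:ℝ) < (A:ℝ) := by exact_mod_cast hApos
      have hbR : (2:ℝ) ≤ (b:ℝ) := by exact_mod_cast hb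
      refine ⟨-(A:ℝ), ?_, ?_⟩ <;> rw [Set.mem_Icc]
      · by_cases hp2 : p ≤ 2*b - 2
        · rw [loF, if_neg hp, if_pos hp2, hiF, if_neg hp, if_pos hp2]
          have : (b:ℝ) ≤ (p:ℝ) := by exact_mod_cast (by omega : b ≤ p)
          constructor <;> linarith
        · rw [loF, if_neg hp, if_neg hp2, hiF, if_neg hp, if_neg hp2]
          constructor <;> linarith
      · by_cases hq2 : q ≤ 2*b - 2
        · rw [loF, if_neg hq, if_pos hq2, hiF, if_neg hq, if_pos hq2]
          have : (b:ℝ) ≤ (q:ℝ) := by exact_mod_cast (by omega : b ≤ q)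
          constructor <;> linarith
        · rw [loF, if_neg hq, if_neg hq2, hiF, if_neg hq, if_neg hq2]
          constructor <;> linarith
  · intro h
    rw [circ_adj (by omega) (by omega)]
    refine ⟨huv, ?_⟩
    by_contra hcon
    have hd0 : (u - v).val ≠ 0 := by
      simp only [ne_eq, ZMod.val_eq_zero]
      exact sub_ne_zero.mpr huv
    have hdA : (u - v).val < A := ZMod.val_lt _
    rcases (by omega : (u - v).val < b ∨ A - b < (u - v).val) with hd | hd
    · -- u = v + d with 1 ≤ d < b
      obtain ⟨i, hq⟩ := coverage n b A (by omega) hA1 hA2 v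
      have he : u = v + (((u - v).val : ℕ) : ZMod A) := by
        have e : (((u - v).val : ℕ) : ZMod A) = u - v := ZMod.natCast_rightInverse _
        rw [e]; ring
      have hkill := kill_lemma n b A hb hA1 v (u - v).val (by omega) hd i hq
      rw [← he] at hkill
      exact hkill (h i)
    · -- v = u + δ with δ = A - d
      obtain ⟨i, hq⟩ := coverage n b A (by omega) hA1 hA2 u
      have hrev : (v - u).val = A - (u - v).val := val_sub_rev' huv
      have he : v = u + (((v - u).val : ℕ) : ZMod A) := by
        have e : (((v - u).val : ℕ) : ZMod A) = v - u := ZMod.natCast_rightInverse _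
        rw [e]; ring
      have hkill := kill_lemma n b A hb hA1 u (v - u).val (by omega) (by omega) i hq
      rw [← he] at hkill
      rw [Set.inter_comm] at hkill
      exact hkill (h i)



lemma indep_card_le (n b r A : ℕ) (hA : A = n * b + r) (hn : 2 ≤ n) (hb : 2 ≤ b)
    (hr1 : 1 ≤ r) (hr2 : r < b) (hnr : b - r - 1 ≤ n)
    (S : Finset (ZMod A))
    (hS : ∀ x ∈ S, ∀ y ∈ S, ¬ (circG A b).Adj x y) :
    S.card ≤ b := by
  classical
  have h2b : 2 * b ≤ n * b := Nat.mul_le_mul_right b hn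
  haveI : NeZero A := ⟨by omega⟩
  have hA1 : 2 * b + 1 ≤ A := by omega
  rcases S.eq_empty_or_nonempty with hS0 | ⟨s₀, hs₀⟩
  · simp [hS0]
  set f : ZMod A → ℕ := fun x => (x - s₀).val with hf
  have hinj : ∀ x ∈ S, ∀ y ∈ S, f x = f y → x = y := by
    intro x _ y _ h
    have := ZMod.val_injective A h
    exact sub_left_inj.mp this
  set T := S.image f with hT
  have hcardT : T.card = S.card := Finset.card_image_of_injOn hinj
  have hT0 : 0 ∈ T := by
    refine Finset.mem_image.mpr ⟨s₀, hs₀, ?_⟩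
    simp [hf]
  have hTlt : ∀ t ∈ T, t < A := by
    intro t ht
    obtain ⟨x, -, rfl⟩ := Finset.mem_image.mp ht
    exact ZMod.val_lt _
  have hTband : ∀ t ∈ T, t < b ∨ A - b < t := by
    intro t ht
    obtain ⟨x, hx, rfl⟩ := Finset.mem_image.mp ht
    have hfx : f x = (x - s₀).val := rfl
    by_cases hxs : x = s₀
    · left; rw [hfx, hxs]; simp; omega
    · have hna := hS x hx s₀ hs₀
      rw [circ_adj (by omega) (by omega)] at hna
      push_neg at hna
      have := hna hxs
      rw [hfx]
      omega
  have hTcast : ∀ t ∈ T, ∃ x ∈ S, ((t : ℕ) : ZMod A) = x - s₀ := by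
    intro t ht
    obtain ⟨x, hx, rfl⟩ := Finset.mem_image.mp ht
    exact ⟨x, hx, ZMod.natCast_rightInverse _⟩
  have hcross : ∀ t ∈ T, ∀ t' ∈ T, t < b → A - b < t' →
      (t + (A - t') < b ∨ A - b < t + (A - t')) := by
    intro t ht t' ht' htb ht'b
    obtain ⟨x, hx, hxe⟩ := hTcast t ht
    obtain ⟨y, hy, hye⟩ := hTcast t' ht'
    have hne : x ≠ y := by
      intro h
      rw [h] at hxe
      rw [← hye] at hxe
      have := ZMod.val_cast_of_lt (n := A) (a := t) (by omega)
      have h2 := ZMod.val_cast_of_lt (n := A) (a := t') (hTlt t' ht')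
      rw [hxe] at this
      omega
    have hna := hS x hx y hy
    rw [circ_adj (by omega) (by omega)] at hna
    push_neg at hna
    have hband := hna hne
    have hxy : x - y = ((t : ℕ) : ZMod A) - ((t' : ℕ) : ZMod A) := by
      rw [hxe, hye]; ring
    have hval : (x - y).val = A - (t' - t) := by
      rw [hxy, zmod_sub_val (by omega) (hTlt t' ht'), if_neg (by omega)]
    rw [hval] at hband
    omega
  -- split T into the low part P and high part U, reflect U to R
  set P := T.filter (fun t => t < b) with hP
  set U := T.filter (fun t => ¬ t < b) with hU
  have hPU : P.card + U.card = T.card := Finset.card_filter_add_card_filter_not _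
  set R := U.image (fun t => A - t) with hR
  have hUband : ∀ t ∈ U, A - b < t ∧ t < A := by
    intro t ht
    rw [hU, Finset.mem_filter] at ht
    exact ⟨(hTband t ht.1).resolve_left ht.2, hTlt t ht.1⟩
  have hRU : R.card = U.card := by
    apply Finset.card_image_of_injOn
    intro t ht t' ht' h
    have h1 := hUband t ht
    have h2 := hUband t' ht'
    have h' : A - t = A - t' := h
    omega
  have hRband : ∀ q ∈ R, 1 ≤ q ∧ q ≤ b - 1 := by
    intro q hq
    obtain ⟨t, ht, rfl⟩ := Finset.mem_image.mp hq
    have := hUband t ht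
    show 1 ≤ A - t ∧ A - t ≤ b - 1
    omega
  have hPband : ∀ p ∈ P, p < b := by
    intro p hp
    rw [hP, Finset.mem_filter] at hp
    exact hp.2
  have hP0 : 0 ∈ P := by
    rw [hP, Finset.mem_filter]
    exact ⟨hT0, by omega⟩
  have hcrossPR : ∀ p ∈ P, ∀ q ∈ R, p + q < b ∨ A - b < p + q := by
    intro p hp q hq
    rw [hP, Finset.mem_filter] at hp
    obtain ⟨t, ht, rfl⟩ := Finset.mem_image.mp hq
    have hband := hUband t ht
    show p + (A - t) < b ∨ A - b < p + (A - t)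
    exact hcross p hp.1 t (Finset.mem_filter.mp ht).1 hp.2 hband.1
  -- final arithmetic
  have hgoal : P.card + R.card ≤ b := by
    rcases R.eq_empty_or_nonempty with hRe | hRne
    · have hPsub : P ⊆ Finset.range b := fun p hp => Finset.mem_range.mpr (hPband p hp)
      have := Finset.card_le_card hPsub
      rw [Finset.card_range] at this
      rw [hRe]
      simpa using this
    · have hPne : P.Nonempty := ⟨0, hP0⟩
      set pm := P.max' hPne with hpm
      set qm := R.max' hRne with hqm
      have hpmP := P.max'_mem hPne
      have hqmR := R.max'_mem hRne
      have hpmb : pm < b := hPband _ hpmP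
      have hqmb : 1 ≤ qm ∧ qm ≤ b - 1 := hRband _ hqmR
      rcases hcrossPR pm hpmP qm hqmR with hlt | hgt
      · have hPsub : P ⊆ Finset.range (pm + 1) := by
          intro p hp
          exact Finset.mem_range.mpr (by have := P.le_max' p hp; omega)
        have hRsub : R ⊆ Finset.Icc 1 qm := by
          intro q hq
          exact Finset.mem_Icc.mpr ⟨(hRband q hq).1, R.le_max' q hq⟩
        have h1 := Finset.card_le_card hPsub
        have h2 := Finset.card_le_card hRsub
        rw [Finset.card_range] at h1
        rw [Nat.card_Icc] at h2
        omega
      · -- boundary case: n = 2, r = b - 3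
        have hn2 : n = 2 := by
          by_contra hc
          have h3 : 3 ≤ n := by omega
          have h3b : 3 * b ≤ n * b := Nat.mul_le_mul_right b h3
          omega
      -- with n = 2 : A = 2b + r, A - b = b + r
        have hA2 : A = 2 * b + r := by rw [hA, hn2]
        have hrb : r = b - 3 ∧ pm = b - 1 ∧ qm = b - 1 ∧ 4 ≤ b := by
          have hn2' : b - r - 1 ≤ 2 := by omega
          omega
        obtain ⟨hr3, hpm1, hqm1, hb4⟩ := hrb
        have hPsub : P ⊆ {0, b - 1} := by
          intro p hp
          rcases hcrossPR p hp qm hqmR with h | h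
          · simp only [Finset.mem_insert, Finset.mem_singleton]
            left; omega
          · simp only [Finset.mem_insert, Finset.mem_singleton]
            right
            have := hPband p hp
            omega
        have hRsub : R ⊆ {b - 1} := by
          intro q hq
          rcases hcrossPR pm hpmP q hq with h | h
          · have := hRband q hq; omega
          · have := hRband q hq
            simp only [Finset.mem_singleton]
            omega
        have h1 := Finset.card_le_card hPsub
        have h2 := Finset.card_le_card hRsub
        have h3 : ({0, b - 1} : Finset ℕ).card ≤ 2 := Finset.card_insert_le _ _ |>.trans (by simp)
        rw [Finset.card_singleton] at h2
        omega
  omega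

lemma chrom_lb (n b r m : ℕ) (hn : 2 ≤ n) (hb : 2 ≤ b)
    (hr1 : 1 ≤ r) (hr2 : r < b) (hnr : b - r - 1 ≤ n)
    (hm : (circG (n * b + r) b).Colorable m) : n + 1 ≤ m := by
  classical
  have h2b : 2 * b ≤ n * b := Nat.mul_le_mul_right b hn
  haveI : NeZero (n * b + r) := ⟨by omega⟩
  obtain ⟨C⟩ := hm
  have hfib := Finset.card_eq_sum_card_fiberwise
    (f := fun v : ZMod (n * b + r) => C v) (s := Finset.univ) (t := Finset.univ)
    (fun x _ => Finset.mem_univ _)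
  have hcA : (Finset.univ : Finset (ZMod (n * b + r))).card = n * b + r := by
    rw [Finset.card_univ, ZMod.card]
  have hbound : ∀ j : Fin m,
      (Finset.univ.filter (fun v : ZMod (n * b + r) => C v = j)).card ≤ b := by
    intro j
    apply indep_card_le n b r (n * b + r) rfl hn hb hr1 hr2 hnr
    intro x hx y hy hadj
    rw [Finset.mem_filter] at hx hy
    exact C.valid hadj (hx.2.trans hy.2.symm)
  have hsum : ∑ _j : Fin m, b = m * b := by
    simp [Finset.sum_const, Finset.card_univ, mul_comm]
  have hle : n * b + r ≤ m * b := by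
    rw [← hcA, hfib, ← hsum]
    exact Finset.sum_le_sum (fun j _ => hbound j)
  have hlt : n * b < m * b := by omega
  have := lt_of_mul_lt_mul_right hlt (Nat.zero_le b)
  omega

theorem stmt15 (n b r : ℕ) (hn : 2 ≤ n) (hb : 2 ≤ b)
    (hr1 : 1 ≤ r) (hr2 : r < b) (hnr : b - r - 1 ≤ n) :
    (boxicity (circG (n * b + r) b) : ℕ∞) ≤
      (circG (n * b + r) b).chromaticNumber := by
  have h2b : 2 * b ≤ n * b := Nat.mul_le_mul_right b hn
  haveI : NeZero (n * b + r) := ⟨by omega⟩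
  have hA1 : 2 * b + 1 ≤ n * b + r := by omega
  have hA2 : n * b + r ≤ n * b + b := by omega
  have hbox : HasBoxRep (circG (n * b + r) b) (n + 1) :=
    ⟨fun u i => loF n b (n * b + r) u i, fun u i => hiF n b (n * b + r) u i,
     fun u v huv => box_iff n b (n * b + r) hb hA1 hA2 u v huv⟩
  have h1 : boxicity (circG (n * b + r) b) ≤ n + 1 := Nat.sInf_le hbox
  rw [SimpleGraph.chromaticNumber]
  refine le_iInf₂ fun m hm => ?_
  have h2 : n + 1 ≤ m := chrom_lb n b r m hn hb hr1 hr2 hnr hm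
  exact_mod_cast Nat.cast_le.mpr (h1.trans h2)
end
end
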